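/- arXiv:1007.2916 — 9 statements merged into one kernel-verified Lean document; each statement's English description precedes it below -/
import Mathlib

section
/- Let X be a separable Banach space, E_1 ⊂ E_2 ⊂ ... an increasing sequence of finite-dimensional subspaces with dense union, and (ε_n) a sequence of positive reals decreasing monotonically to zero. If (e_n) is a canonical ℓ1-type sequence in B_X, then there is a subsequence (f_n) of (e_n) such that for every n, every x ∈ E_n, and every finite linear combination y = Σ_{k=n+1}^{M} λ_k f_k, one has ‖x + y‖ ≥ (1 − ε_n)‖x‖ + Σ_{k=n+1}^{M} (1 − ε_{k−1}) |λ_k|. -/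
/-!
Since `‖x + eⱼ‖ → ‖x‖ + 1` pointwise and `x ↦ ‖x + eⱼ‖ - ‖x‖` is 2-Lipschitz, the convergence is
uniform on compact sets; with `‖eⱼ‖ ≤ 1` and homogeneity this gives, for every finite-dimensional
`F` and `θ < 1`, that `‖z + c eⱼ‖ ≥ θ (‖z‖ + |c|)` for all `z ∈ F`, `c ∈ ℝ` and all large `j`.
Replace `ε` by a smaller strictly decreasing `ε' < 1` and pick `f_{k+1} = e_{φ(k+1)}` with
`θ = (1 - ε'ₖ) / (1 - ε'ₖ₊₁)` for the span of `Eₖ` and `e₀, …, e_{φ(k)}`. The factors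
telescope, so induction on `M` gives the estimate with `1 - ε'_M ≤ 1` in front of the norm.
-/

open Filter Finset Submodule

theorem exists_strictAnti_pos_lt_one_le {ε : ℕ → ℝ} (hεpos : ∀ n, 0 < ε n) (hεanti : Antitone ε) :
    ∃ ε' : ℕ → ℝ, StrictAnti ε' ∧ (∀ n, 0 < ε' n) ∧ (∀ n, ε' n < 1) ∧ ∀ n, ε' n ≤ ε n := by
  have hmin : ∀ n, 0 < min (ε n) 1 := fun n => lt_min (hεpos n) one_pos
  refine ⟨fun n => min (ε n) 1 / (n + 2), fun m n hmn => ?_,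
    fun n => div_pos (hmin n) (by positivity), fun n => ?_, fun n => ?_⟩
  · calc min (ε n) 1 / (n + 2) ≤ min (ε m) 1 / (n + 2) := by gcongr; exact hεanti hmn.le
      _ < min (ε m) 1 / (m + 2) := by gcongr; exact hmin m
  · rw [div_lt_one (by positivity)]
    linarith [min_le_right (ε n) 1, n.cast_nonneg (α := ℝ)]
  · rw [div_le_iff₀ (by positivity)]
    nlinarith [min_le_left (ε n) 1, hmin n, n.cast_nonneg (α := ℝ)]

theorem exists_strictMono_forall_of_eventually_succ {P : ℕ → ℕ → ℕ → Prop}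
    (h : ∀ n N, ∀ᶠ k in atTop, P n N k) :
    ∃ φ : ℕ → ℕ, StrictMono φ ∧ ∀ n, P n (φ n) (φ (n + 1)) := by
  choose u hu using fun n N => ((h n N).and (eventually_gt_atTop N)).exists
  exact ⟨fun n => Nat.rec 0 (fun n v => u n v) n, strictMono_nat_of_lt_succ fun n => (hu n _).2,
    fun n => (hu n _).1⟩

theorem eventually_forall_mem_of_isCompact_norm_add_ge {X : Type*} [SeminormedAddCommGroup X]
    {e : ℕ → X}
    (hlim : ∀ x : X, Tendsto (fun n => ‖x + e n‖) atTop (nhds (‖x‖ + 1)))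
    {K : Set X} (hK : IsCompact K) {δ : ℝ} (hδ : 0 < δ) :
    ∀ᶠ j in atTop, ∀ w ∈ K, ‖w‖ + 1 - δ ≤ ‖w + e j‖ := by
  obtain ⟨t, -, ht, hKt⟩ := finite_cover_balls_of_compact hK (by positivity : 0 < δ / 4)
  have hnet : ∀ᶠ j in atTop, ∀ w₀ ∈ t, ‖w₀‖ + 1 - δ / 2 < ‖w₀ + e j‖ :=
    (ht.eventually_all).2 fun w₀ _ =>
      (hlim w₀).eventually (eventually_gt_nhds (by linarith))
  filter_upwards [hnet] with j hj w hw
  obtain ⟨w₀, hw₀, hww₀⟩ := Set.mem_iUnion₂.1 (hKt hw)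
  rw [Metric.mem_ball, dist_eq_norm] at hww₀
  have h₁ := norm_le_norm_add_norm_sub' w w₀
  have h₂ := norm_le_norm_add_norm_sub (w + e j) (w₀ + e j)
  rw [add_sub_add_right_eq_sub] at h₂
  linarith [hj w₀ hw₀]

section CanonicalL1

variable {X : Type*} [NormedAddCommGroup X] [NormedSpace ℝ X] {e : ℕ → X}

theorem eventually_forall_mem_norm_add_ge (he : ∀ n, ‖e n‖ ≤ 1)
    (hlim : ∀ x : X, Tendsto (fun n => ‖x + e n‖) atTop (nhds (‖x‖ + 1)))
    (F : Submodule ℝ X) [FiniteDimensional ℝ F] {θ : ℝ} (hθ : θ < 1) :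
    ∀ᶠ j in atTop, ∀ w ∈ F, θ * (‖w‖ + 1) ≤ ‖w + e j‖ := by
  set R := (1 + θ) / (1 - θ)
  have hK : IsCompact (Subtype.val '' Metric.closedBall (0 : F) R) :=
    (isCompact_closedBall _ _).image continuous_subtype_val
  filter_upwards [eventually_forall_mem_of_isCompact_norm_add_ge hlim hK (sub_pos.2 hθ)]
    with j hj w hw
  by_cases hwR : ‖w‖ ≤ R
  · have := hj w ⟨⟨w, hw⟩, by simpa using hwR, rfl⟩
    nlinarith [norm_nonneg w]
  · -- far from the origin the crude bound `‖w + eⱼ‖ ≥ ‖w‖ - 1` already suffices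
    have hfar : 1 + θ < ‖w‖ * (1 - θ) := (div_lt_iff₀ (sub_pos.2 hθ)).1 (not_le.1 hwR)
    linarith [norm_sub_le_norm_add w (e j), he j]

theorem eventually_forall_mem_norm_add_smul_ge (he : ∀ n, ‖e n‖ ≤ 1)
    (hlim : ∀ x : X, Tendsto (fun n => ‖x + e n‖) atTop (nhds (‖x‖ + 1)))
    (F : Submodule ℝ X) [FiniteDimensional ℝ F] {θ : ℝ} (hθ : θ < 1) :
    ∀ᶠ j in atTop, ∀ z ∈ F, ∀ c : ℝ, θ * (‖z‖ + |c|) ≤ ‖z + c • e j‖ := by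
  filter_upwards [eventually_forall_mem_norm_add_ge he hlim F hθ] with j hj z hz c
  rcases eq_or_ne c 0 with rfl | hc
  · simp only [abs_zero, add_zero, zero_smul]
    nlinarith [norm_nonneg z]
  · calc θ * (‖z‖ + |c|) = |c| * (θ * (‖c⁻¹ • z‖ + 1)) := by
          rw [norm_smul, norm_inv, Real.norm_eq_abs]
          field_simp
      _ ≤ |c| * ‖c⁻¹ • z + e j‖ := by gcongr; exact hj _ (F.smul_mem _ hz)
      _ = ‖z + c • e j‖ := by
          rw [← Real.norm_eq_abs, ← norm_smul, smul_add, smul_inv_smul₀ hc]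

end CanonicalL1

theorem weighted_sum_le_norm_add_sum {X : Type*} [SeminormedAddCommGroup X] [Module ℝ X]
    {F : ℕ → Submodule ℝ X} (hF : Monotone F) {f : ℕ → X} (hf : ∀ k, f k ∈ F k) {a : ℕ → ℝ}
    (hstep : ∀ k, ∀ z ∈ F k, ∀ c : ℝ, a k * (‖z‖ + |c|) ≤ a (k + 1) * ‖z + c • f (k + 1)‖)
    {n M : ℕ} (hnM : n ≤ M) {x : X} (hx : x ∈ F n) (l : ℕ → ℝ) :
    a n * ‖x‖ + ∑ k ∈ Icc (n + 1) M, a (k - 1) * |l k| ≤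
      a M * ‖x + ∑ k ∈ Icc (n + 1) M, l k • f k‖ := by
  induction M, hnM using Nat.le_induction with
  | base => simp
  | succ M hnM ih =>
    have hz : x + ∑ k ∈ Icc (n + 1) M, l k • f k ∈ F M :=
      add_mem (hF hnM hx) (sum_mem fun k hk => smul_mem _ _ (hF (mem_Icc.1 hk).2 (hf k)))
    rw [sum_Icc_succ_top (by omega), sum_Icc_succ_top (by omega), ← add_assoc x,
      Nat.add_sub_cancel]
    linarith [hstep M _ hz (l (M + 1))]

theorem stmt_1_general {X : Type*} [NormedAddCommGroup X] [NormedSpace ℝ X]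
    (E : ℕ → Subspace ℝ X) (hmono : Monotone E)
    (hfd : ∀ n, FiniteDimensional ℝ (E n))
    (ε : ℕ → ℝ) (hεpos : ∀ n, 0 < ε n) (hεanti : Antitone ε)
    (e : ℕ → X) (he : ∀ n, ‖e n‖ ≤ 1)
    (hlim : ∀ x : X, Filter.Tendsto (fun n => ‖x + e n‖) Filter.atTop (nhds (‖x‖ + 1))) :
    ∃ φ : ℕ → ℕ, StrictMono φ ∧
      ∀ n M : ℕ, ∀ x ∈ E n, ∀ l : ℕ → ℝ,
        ‖x + ∑ k ∈ Finset.Icc (n + 1) M, l k • e (φ k)‖ ≥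
          (1 - ε n) * ‖x‖ + ∑ k ∈ Finset.Icc (n + 1) M, (1 - ε (k - 1)) * |l k| := by
  classical
  obtain ⟨ε', hε'anti, hε'pos, hε'lt, hε'le⟩ := exists_strictAnti_pos_lt_one_le hεpos hεanti
  set F : ℕ → ℕ → Submodule ℝ X := fun k N => E k ⊔ span ℝ ((range (N + 1)).image e : Set X)
  have hstep : ∀ k N, ∀ᶠ j in atTop, ∀ z ∈ F k N, ∀ c : ℝ,
      (1 - ε' k) * (‖z‖ + |c|) ≤ (1 - ε' (k + 1)) * ‖z + c • e j‖ := by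
    intro k N
    have := hfd k
    have hpos : 0 < 1 - ε' (k + 1) := by linarith [hε'lt (k + 1)]
    have hθ : (1 - ε' k) / (1 - ε' (k + 1)) < 1 :=
      (div_lt_one hpos).2 (by linarith [hε'anti k.lt_succ_self])
    filter_upwards [eventually_forall_mem_norm_add_smul_ge he hlim (F k N) hθ] with j hj z hz c
    rw [mul_comm (1 - ε' (k + 1)), ← div_le_iff₀ hpos, ← div_mul_eq_mul_div]
    exact hj z hz c
  obtain ⟨φ, hφ, hφstep⟩ := exists_strictMono_forall_of_eventually_succ hstep
  refine ⟨φ, hφ, fun n M x hx l => ?_⟩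
  rcases le_or_gt n M with hnM | hMn
  · have hFmono : Monotone fun k => F k (φ k) := fun i j hij =>
      sup_le_sup (hmono hij) (span_mono (by gcongr; exact hφ.monotone hij))
    have hmem : ∀ k, e (φ k) ∈ F k (φ k) := fun k =>
      mem_sup_right (subset_span (by simpa using ⟨φ k, le_rfl, rfl⟩))
    calc (1 - ε n) * ‖x‖ + ∑ k ∈ Icc (n + 1) M, (1 - ε (k - 1)) * |l k|
        ≤ (1 - ε' n) * ‖x‖ + ∑ k ∈ Icc (n + 1) M, (1 - ε' (k - 1)) * |l k| := by
          gcongr with k <;> apply hε'le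
      _ ≤ (1 - ε' M) * ‖x + ∑ k ∈ Icc (n + 1) M, l k • e (φ k)‖ :=
          weighted_sum_le_norm_add_sum hFmono hmem hφstep hnM (mem_sup_left hx) l
      _ ≤ _ := mul_le_of_le_one_left (norm_nonneg _) (by linarith [hε'pos M])
  · rw [Icc_eq_empty (by omega)]
    simp only [sum_empty, add_zero, ge_iff_le]
    nlinarith [norm_nonneg x, hεpos n]

theorem stmt_1 {X : Type*} [NormedAddCommGroup X] [NormedSpace ℝ X]
    [CompleteSpace X] [TopologicalSpace.SeparableSpace X]
    (E : ℕ → Subspace ℝ X) (hmono : Monotone E)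
    (hfd : ∀ n, FiniteDimensional ℝ (E n))
    (hdense : Dense (⋃ n, (E n : Set X)))
    (ε : ℕ → ℝ) (hεpos : ∀ n, 0 < ε n) (hεanti : Antitone ε)
    (hεlim : Filter.Tendsto ε Filter.atTop (nhds 0))
    (e : ℕ → X) (he : ∀ n, ‖e n‖ ≤ 1)
    (hlim : ∀ x : X, Filter.Tendsto (fun n => ‖x + e n‖) Filter.atTop (nhds (‖x‖ + 1))) :
    ∃ φ : ℕ → ℕ, StrictMono φ ∧
      ∀ n M : ℕ, ∀ x ∈ E n, ∀ l : ℕ → ℝ,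
        ‖x + ∑ k ∈ Finset.Icc (n + 1) M, l k • e (φ k)‖ ≥
          (1 - ε n) * ‖x‖ + ∑ k ∈ Finset.Icc (n + 1) M, (1 - ε (k - 1)) * |l k| :=
  stmt_1_general E hmono hfd ε hεpos hεanti e he hlim
end

section
/- If a Banach space X contains a canonical ℓ1-type sequence, then X contains a closed subspace isomorphic to ℓ1. -/
/-!
Say that `v` is `δ`-almost `ℓ¹`-orthogonal to a subspace `E` if `(1 - δ) (‖x‖ + |t|) ≤ ‖x + t v‖`
for all `x ∈ E` and scalars `t`. If `E` is finite dimensional, then `e n` is `δ`-almost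
`ℓ¹`-orthogonal to `E` for all large `n`: for `|t|` small compared with `‖x‖` this is the triangle
inequality, and otherwise `‖x + t e n‖ = |t| ‖t⁻¹ x + e n‖` with `t⁻¹ x` in a compact ball of `E`,
on which the convergence `‖y + e n‖ → ‖y‖ + 1` is uniform. Choosing inductively `v k = e (φ k)`
almost orthogonal to the span of `v 0, …, v (k-1)` with errors `δ k` summing to at most `1/2`
gives `‖∑ a k v k‖ ≥ ½ ∑ |a k|`, so `a ↦ ∑ a k v k` is an isomorphism of `ℓ¹` onto its range,
which is closed.
-/

open Filter Metric Topology Finset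
open scoped lp NNReal

lemma lp.hasSum_norm_one {ι E : Type*} [NormedAddCommGroup E] (a : ℓ¹(ι, E)) :
    HasSum (fun i => ‖a i‖) ‖a‖ := by
  simpa using lp.hasSum_norm (p := 1) (by norm_num) a

section Seminormed

variable {X : Type*} [SeminormedAddCommGroup X]

lemma eventually_norm_add_ge_of_isCompact {e : ℕ → X}
    (hlim : ∀ x : X, Tendsto (fun n => ‖x + e n‖) atTop (𝓝 (‖x‖ + 1)))
    {K : Set X} (hK : IsCompact K) {ε : ℝ} (hε : 0 < ε) :
    ∀ᶠ n in atTop, ∀ x ∈ K, ‖x‖ + 1 - ε ≤ ‖x + e n‖ := by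
  obtain ⟨C, -, hC, hKC⟩ := hK.finite_cover_balls (e := ε / 3) (by positivity)
  have hcenters : ∀ᶠ n in atTop, ∀ c ∈ C, ‖c‖ + 1 - ε / 3 ≤ ‖c + e n‖ :=
    (eventually_all_finite hC).2 fun c _ => (hlim c).eventually_const_le (by linarith)
  filter_upwards [hcenters] with n hn x hx
  obtain ⟨c, hc, hxc⟩ := Set.mem_iUnion₂.1 (hKC hx)
  rw [mem_ball, dist_eq_norm] at hxc
  have hshift := norm_sub_norm_le (c + e n) (x + e n)
  rw [add_sub_add_right_eq_sub, norm_sub_rev] at hshift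
  linarith [hn c hc, norm_sub_norm_le x c]

variable [NormedSpace ℝ X]

lemma norm_smul_le_of_norm_le_one {v : X} (hv : ‖v‖ ≤ 1) (t : ℝ) : ‖t • v‖ ≤ ‖t‖ := by
  rw [norm_smul]
  exact mul_le_of_le_one_right (norm_nonneg _) hv

def IsAlmostL1Orthogonal (δ : ℝ) (E : Submodule ℝ X) (v : X) : Prop :=
  ∀ x ∈ E, ∀ t : ℝ, (1 - δ) * (‖x‖ + |t|) ≤ ‖x + t • v‖

lemma IsAlmostL1Orthogonal.mono {δ : ℝ} {E F : Submodule ℝ X} {v : X} (hEF : E ≤ F)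
    (h : IsAlmostL1Orthogonal δ F v) : IsAlmostL1Orthogonal δ E v :=
  fun x hx => h x (hEF hx)

lemma norm_add_smul_ge_of_abs_le {δ : ℝ} {v : X} (hv : ‖v‖ ≤ 1) {x : X} {t : ℝ}
    (ht : |t| ≤ δ / 2 * (‖x‖ + |t|)) : (1 - δ) * (‖x‖ + |t|) ≤ ‖x + t • v‖ := by
  have htv := norm_smul_le_of_norm_le_one hv t
  have hx := norm_sub_norm_le x (-(t • v))
  rw [sub_neg_eq_add, norm_neg] at hx
  rw [Real.norm_eq_abs] at htv
  linarith

lemma norm_add_smul_ge_of_norm_inv_smul_add_ge {δ : ℝ} (hδ : 0 ≤ δ) {v x : X} {t : ℝ}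
    (ht : t ≠ 0) (h : ‖t⁻¹ • x‖ + 1 - δ ≤ ‖t⁻¹ • x + v‖) :
    (1 - δ) * (‖x‖ + |t|) ≤ ‖x + t • v‖ := by
  have habs : 0 < |t| := abs_pos.2 ht
  have hx : |t| * ‖t⁻¹ • x‖ = ‖x‖ := by
    rw [norm_smul, Real.norm_eq_abs, abs_inv, mul_inv_cancel_left₀ habs.ne']
  have hscale : ‖x + t • v‖ = |t| * ‖t⁻¹ • x + v‖ := by
    rw [← Real.norm_eq_abs, ← norm_smul, smul_add, smul_inv_smul₀ ht]
  rw [hscale]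
  nlinarith [mul_le_mul_of_nonneg_left h habs.le, mul_nonneg hδ (norm_nonneg x)]

lemma mul_sum_abs_le_norm_sum {v : ℕ → X} {δ : ℕ → ℝ} (hδ₀ : ∀ k, 0 ≤ δ k) (hδ₁ : ∀ k, δ k ≤ 1)
    (hv : ∀ k, IsAlmostL1Orthogonal (δ k) (Submodule.span ℝ (v '' Set.Iio k)) (v k))
    (a : ℕ → ℝ) (m : ℕ) :
    (1 - ∑ k ∈ range m, δ k) * ∑ k ∈ range m, |a k| ≤ ‖∑ k ∈ range m, a k • v k‖ := by
  induction m with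
  | zero => simp
  | succ m ih =>
    have hmem : ∑ k ∈ range m, a k • v k ∈ Submodule.span ℝ (v '' Set.Iio m) :=
      Submodule.sum_mem _ fun k hk =>
        Submodule.smul_mem _ _ (Submodule.subset_span ⟨k, mem_range.1 hk, rfl⟩)
    have hstep := hv m _ hmem (a m)
    have hA : 0 ≤ ∑ k ∈ range m, |a k| := sum_nonneg fun k _ => abs_nonneg _
    have hδsum : 0 ≤ ∑ k ∈ range m, δ k := sum_nonneg fun k _ => hδ₀ k
    rw [sum_range_succ, sum_range_succ, sum_range_succ]
    nlinarith [mul_le_mul_of_nonneg_left ih (sub_nonneg.2 (hδ₁ m)), mul_nonneg (hδ₀ m) hA,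
      mul_nonneg (mul_nonneg (hδ₀ m) hδsum) hA, mul_nonneg hδsum (abs_nonneg (a m))]

end Seminormed

section Normed

variable {X : Type*} [NormedAddCommGroup X] [NormedSpace ℝ X]

lemma eventually_isAlmostL1Orthogonal {e : ℕ → X} (he : ∀ n, ‖e n‖ ≤ 1)
    (hlim : ∀ x : X, Tendsto (fun n => ‖x + e n‖) atTop (𝓝 (‖x‖ + 1)))
    (E : Submodule ℝ X) [FiniteDimensional ℝ E] {δ : ℝ} (hδ : 0 < δ) :
    ∀ᶠ n in atTop, IsAlmostL1Orthogonal δ E (e n) := by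
  have hK : IsCompact ((↑) '' closedBall (0 : E) (2 / δ) : Set X) :=
    (isCompact_closedBall _ _).image continuous_subtype_val
  filter_upwards [eventually_norm_add_ge_of_isCompact hlim hK hδ] with n hn x hx t
  rcases le_or_gt |t| (δ / 2 * (‖x‖ + |t|)) with hsmall | hlarge
  · exact norm_add_smul_ge_of_abs_le (he n) hsmall
  have ht : t ≠ 0 := by
    rintro rfl
    simp only [abs_zero, add_zero] at hlarge
    nlinarith [norm_nonneg x]
  refine norm_add_smul_ge_of_norm_inv_smul_add_ge hδ.le ht
    (hn _ ⟨⟨t⁻¹ • x, E.smul_mem _ hx⟩, ?_, rfl⟩)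
  rw [mem_closedBall_zero_iff, Submodule.coe_norm, norm_smul, norm_inv, Real.norm_eq_abs,
    inv_mul_le_iff₀ (abs_pos.2 ht), mul_div_assoc', le_div_iff₀ hδ]
  nlinarith [norm_nonneg x, mul_nonneg hδ.le (abs_nonneg t)]

lemma exists_seq_isAlmostL1Orthogonal {e : ℕ → X} (he : ∀ n, ‖e n‖ ≤ 1)
    (hlim : ∀ x : X, Tendsto (fun n => ‖x + e n‖) atTop (𝓝 (‖x‖ + 1)))
    {δ : ℕ → ℝ} (hδ : ∀ k, 0 < δ k) :
    ∃ φ : ℕ → ℕ, ∀ k,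
      IsAlmostL1Orthogonal (δ k) (Submodule.span ℝ (e ∘ φ '' Set.Iio k)) (e (φ k)) := by
  have hpick : ∀ k (S : Finset ℕ), ∃ n,
      IsAlmostL1Orthogonal (δ k) (Submodule.span ℝ (e '' S)) (e n) := fun k S =>
    have := FiniteDimensional.span_of_finite ℝ (S.finite_toSet.image e)
    (eventually_isAlmostL1Orthogonal he hlim _ (hδ k)).exists
  choose pick hpick using hpick
  -- `S k` is the set of indices chosen at steps `0, …, k-1`.
  let S : ℕ → Finset ℕ := fun k => Nat.rec ∅ (fun k S => insert (pick k S) S) k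
  have hS : Monotone S := monotone_nat_of_le_succ fun k => subset_insert _ _
  refine ⟨fun k => pick k (S k), fun k => (hpick k (S k)).mono (Submodule.span_mono ?_)⟩
  rintro _ ⟨j, hj, rfl⟩
  exact Set.mem_image_of_mem e (hS (Nat.succ_le_of_lt hj) (mem_insert_self _ _))

variable [CompleteSpace X]

lemma summable_smul_of_norm_le_one {v : ℕ → X} (hv : ∀ k, ‖v k‖ ≤ 1) (a : ℓ¹(ℕ, ℝ)) :
    Summable fun k => a k • v k :=
  (lp.hasSum_norm_one a).summable.of_norm_bounded fun k => norm_smul_le_of_norm_le_one (hv k) _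

noncomputable def l1Synthesis (v : ℕ → X) (hv : ∀ k, ‖v k‖ ≤ 1) : ℓ¹(ℕ, ℝ) →L[ℝ] X :=
  LinearMap.mkContinuous
    { toFun a := ∑' k, a k • v k
      map_add' a b := by
        simp only [lp.coeFn_add, Pi.add_apply, add_smul]
        exact (summable_smul_of_norm_le_one hv a).tsum_add (summable_smul_of_norm_le_one hv b)
      map_smul' c a := by
        simp only [lp.coeFn_smul, Pi.smul_apply, smul_eq_mul, RingHom.id_apply, ← smul_smul]
        exact (summable_smul_of_norm_le_one hv a).tsum_const_smul c }
    1 fun a => by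
      simpa using tsum_of_norm_bounded (lp.hasSum_norm_one a)
        fun k => norm_smul_le_of_norm_le_one (hv k) (a k)

lemma hasSum_l1Synthesis {v : ℕ → X} (hv : ∀ k, ‖v k‖ ≤ 1) (a : ℓ¹(ℕ, ℝ)) :
    HasSum (fun k => a k • v k) (l1Synthesis v hv a) :=
  (summable_smul_of_norm_le_one hv a).hasSum

lemma antilipschitzWith_l1Synthesis {v : ℕ → X} (hv : ∀ k, ‖v k‖ ≤ 1) {c : ℝ≥0}
    (hc : ∀ (a : ℕ → ℝ) (m : ℕ), ∑ k ∈ range m, |a k| ≤ c * ‖∑ k ∈ range m, a k • v k‖) :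
    AntilipschitzWith c (l1Synthesis v hv) :=
  (l1Synthesis v hv).antilipschitz_of_bound fun a =>
    le_of_tendsto_of_tendsto' (lp.hasSum_norm_one a).tendsto_sum_nat
      ((hasSum_l1Synthesis hv a).tendsto_sum_nat.norm.const_mul (c : ℝ)) fun m => by
        simpa only [Real.norm_eq_abs] using hc a m

end Normed

theorem stmt_2 {X : Type*} [NormedAddCommGroup X] [NormedSpace ℝ X] [CompleteSpace X]
    (e : ℕ → X) (he : ∀ n, ‖e n‖ ≤ 1)
    (hlim : ∀ x : X, Filter.Tendsto (fun n => ‖x + e n‖) Filter.atTop (nhds (‖x‖ + 1))) :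
    ∃ Z : Subspace ℝ X, IsClosed (Z : Set X) ∧
      Nonempty (Z ≃L[ℝ] lp (fun _ : ℕ => ℝ) 1) := by
  set δ : ℕ → ℝ := fun k => (1 / 2) ^ k / 4
  have hδ₀ : ∀ k, 0 ≤ δ k := fun k => by positivity
  have hδ₁ : ∀ k, δ k ≤ 1 := fun k =>
    div_le_one_of_le₀ ((pow_le_one₀ (by norm_num) (by norm_num)).trans (by norm_num)) (by norm_num)
  obtain ⟨φ, hφ⟩ := exists_seq_isAlmostL1Orthogonal he hlim (δ := δ) fun k => by positivity
  set T := l1Synthesis (e ∘ φ) fun k => he (φ k)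
  have hT : AntilipschitzWith 2 T := antilipschitzWith_l1Synthesis _ fun a m => by
    have hδsum : ∑ k ∈ range m, δ k ≤ 1 / 2 := by
      simp only [δ, ← sum_div]
      linarith [sum_geometric_two_le m]
    have hlower := mul_sum_abs_le_norm_sum hδ₀ hδ₁ hφ a m
    have hA : 0 ≤ ∑ k ∈ range m, |a k| := sum_nonneg fun k _ => abs_nonneg _
    push_cast
    nlinarith
  have hclosed : IsClosed (Set.range T) := hT.isClosed_range T.uniformContinuous
  exact ⟨LinearMap.range (T : ℓ¹(ℕ, ℝ) →ₗ[ℝ] X), by rwa [LinearMap.coe_range],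
    ⟨(T.equivRange hT.injective hclosed).symm⟩⟩
end

section
/- If X and Y are separable almost Daugavet spaces, then X ⊕_∞ Y (the product with norm ‖(x,y)‖ = max{‖x‖,‖y‖}) is an almost Daugavet space. -/
/-!
Given norming subspaces `A ⊆ X*` and `B ⊆ Y*` with the Daugavet property, take the functionals
on `X ⊕_∞ Y` whose restrictions to `X` and to `Y` lie in `A` and in `B`; they norm `X ⊕_∞ Y`.
For such a functional `Φ = f ⊕ g` and `(x, y)` with `‖y‖ ≤ ‖x‖`, evaluating
`Id + Φ ⊗ (x, y)` at points `(u, v)` of the unit ball with `g v` close to `‖g‖` reduces the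
Daugavet equation to an inequality inside `X`: for every `c ≥ 0`,
`sup_{‖u‖ ≤ 1} ‖u + (f u + c) x‖ ≥ 1 + (‖f‖ + c) ‖x‖`.
For `c = 0` this is the Daugavet equation of `f ⊗ x`, and convexity of `t ↦ ‖u + t x‖`, in the
form `t ‖u + a x‖ ≤ (t - a) ‖u‖ + a ‖u + t x‖` with `a = f u ≤ ‖f‖` and `t = a + c`, carries it
over to `c > 0`.
-/

/-- `Y ⊆ X*` is norming: `sup {|f x| : f ∈ Y, ‖f‖ ≤ 1} = ‖x‖` for every `x`. -/
def IsNormingSubspace {X : Type*} [NormedAddCommGroup X] [NormedSpace ℝ X]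
    (Y : Subspace ℝ (X →L[ℝ] ℝ)) : Prop :=
  ∀ x : X, ‖x‖ = sSup {r : ℝ | ∃ f ∈ Y, ‖f‖ ≤ 1 ∧ r = |f x|}

/-- `X` has the Daugavet property with respect to `Y ⊆ X*`: every rank-one operator
`T = y* ⊗ x` with `y* ∈ Y` satisfies `‖Id + T‖ = 1 + ‖T‖`. -/
def HasDaugavetWrt {X : Type*} [NormedAddCommGroup X] [NormedSpace ℝ X]
    (Y : Subspace ℝ (X →L[ℝ] ℝ)) : Prop :=
  ∀ (x : X), ∀ f ∈ Y,
    ‖ContinuousLinearMap.id ℝ X + ContinuousLinearMap.smulRight f x‖ =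
      1 + ‖ContinuousLinearMap.smulRight f x‖

/-- `X` is an almost Daugavet space. -/
def AlmostDaugavet (X : Type*) [NormedAddCommGroup X] [NormedSpace ℝ X] : Prop :=
  ∃ Y : Subspace ℝ (X →L[ℝ] ℝ), IsNormingSubspace Y ∧ HasDaugavetWrt Y

open Set ContinuousLinearMap

section

variable {E F : Type*} [NormedAddCommGroup E] [NormedSpace ℝ E]
  [NormedAddCommGroup F] [NormedSpace ℝ F]

theorem ContinuousLinearMap.exists_nonneg_apply_and_lt_norm_apply (T : E →L[ℝ] F)
    (f : E →L[ℝ] ℝ) {r : ℝ} (hr : r < ‖T‖) : ∃ u, ‖u‖ ≤ 1 ∧ 0 ≤ f u ∧ r < ‖T u‖ := by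
  obtain ⟨w, hw, hrw⟩ := T.exists_lt_apply_of_lt_opNorm hr
  rcases le_total 0 (f w) with h | h
  · exact ⟨w, hw.le, h, hrw⟩
  · exact ⟨-w, by simpa using hw.le, by simpa using h, by simpa using hrw⟩

theorem norm_id_add_smulRight_le (f : E →L[ℝ] ℝ) (x : E) :
    ‖ContinuousLinearMap.id ℝ E + smulRight f x‖ ≤ 1 + ‖smulRight f x‖ :=
  (norm_add_le _ _).trans (add_le_add_left norm_id_le _)

theorem mul_norm_add_smul_le (u x : E) {a t : ℝ} (ha : 0 ≤ a) (hat : a ≤ t) :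
    t * ‖u + a • x‖ ≤ (t - a) * ‖u‖ + a * ‖u + t • x‖ := by
  have hsplit : t • (u + a • x) = (t - a) • u + a • (u + t • x) := by module
  calc t * ‖u + a • x‖ = ‖(t - a) • u + a • (u + t • x)‖ := by
        rw [← hsplit, norm_smul, Real.norm_of_nonneg (ha.trans hat)]
    _ ≤ (t - a) * ‖u‖ + a * ‖u + t • x‖ := by
        refine (norm_add_le _ _).trans_eq ?_
        rw [norm_smul, norm_smul, Real.norm_of_nonneg (sub_nonneg.2 hat), Real.norm_of_nonneg ha]

theorem exists_norm_eq_one_sameRay [Nontrivial E] (x : E) :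
    ∃ u : E, ‖u‖ = 1 ∧ SameRay ℝ u x := by
  rcases eq_or_ne x 0 with rfl | hx
  · obtain ⟨u, hu⟩ := exists_norm_eq E zero_le_one
    exact ⟨u, hu, SameRay.zero_right u⟩
  · exact ⟨‖x‖⁻¹ • x, norm_smul_inv_norm hx, SameRay.sameRay_nonneg_smul_left x (by positivity)⟩

theorem one_add_mul_norm_le_of_forall_le [Nontrivial E] (x : E) {c K : ℝ} (hc : 0 ≤ c)
    (hK : ∀ u : E, ‖u‖ ≤ 1 → ‖u + c • x‖ ≤ K) : 1 + c * ‖x‖ ≤ K := by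
  obtain ⟨u, hu, hux⟩ := exists_norm_eq_one_sameRay x
  have hnorm := (hux.nonneg_smul_right hc).norm_add
  rw [hu, norm_smul, Real.norm_of_nonneg hc] at hnorm
  exact hnorm ▸ hK u hu.le

namespace HasDaugavetWrt

variable {A : Subspace ℝ (E →L[ℝ] ℝ)} {f : E →L[ℝ] ℝ}

theorem nontrivial (hA : HasDaugavetWrt A) : Nontrivial E := by
  have hid := hA 0 0 A.zero_mem
  simp only [smulRight_zero, add_zero, norm_zero] at hid
  by_contra h
  rw [not_nontrivial_iff_subsingleton] at h
  rw [Subsingleton.elim (ContinuousLinearMap.id ℝ E) 0, norm_zero] at hid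
  norm_num at hid

theorem exists_nonneg_apply_lt_norm (hA : HasDaugavetWrt A) (hf : f ∈ A) (x : E) {r : ℝ}
    (hr : r < 1 + ‖f‖ * ‖x‖) : ∃ u, ‖u‖ ≤ 1 ∧ 0 ≤ f u ∧ r < ‖u + f u • x‖ := by
  rw [← norm_smulRight_apply, ← hA x f hf] at hr
  simpa using
    (ContinuousLinearMap.id ℝ E + smulRight f x).exists_nonneg_apply_and_lt_norm_apply f hr

theorem one_add_mul_le_of_forall_le (hA : HasDaugavetWrt A) (hf : f ∈ A) (x : E) {c K : ℝ}
    (hc : 0 ≤ c)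
    (hK : ∀ u, ‖u‖ ≤ 1 → ‖u + (f u + c) • x‖ ≤ K) : 1 + (‖f‖ + c) * ‖x‖ ≤ K := by
  have := hA.nontrivial
  rcases (mul_nonneg (norm_nonneg f) (norm_nonneg x)).eq_or_lt with hfx | hfx
  · rcases mul_eq_zero.1 hfx.symm with hf0 | hx0
    · rw [norm_eq_zero] at hf0
      subst hf0
      simpa using one_add_mul_norm_le_of_forall_le x hc (by simpa using hK)
    · rw [norm_eq_zero] at hx0
      subst hx0
      simpa using one_add_mul_norm_le_of_forall_le (0 : E) hc (by simpa using hK)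
  have hf0 : 0 < ‖f‖ := pos_of_mul_pos_left hfx (norm_nonneg x)
  have key : ∀ r ∈ Ioo 1 (1 + ‖f‖ * ‖x‖), (‖f‖ + c) * (r - 1) ≤ ‖f‖ * (K - 1) := by
    rintro r ⟨hr1, hr⟩
    obtain ⟨u, hu, ha, hru⟩ := hA.exists_nonneg_apply_lt_norm hf x hr
    set a := f u
    have haf : a ≤ ‖f‖ := (le_abs_self a).trans (by simpa using f.le_opNorm_of_le hu)
    have hax : r < 1 + a * ‖x‖ := by
      calc r < ‖u + a • x‖ := hru
        _ ≤ ‖u‖ + a * ‖x‖ :=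
          (norm_add_le _ _).trans_eq (by rw [norm_smul, Real.norm_of_nonneg ha])
        _ ≤ 1 + a * ‖x‖ := by gcongr
    have ha0 : 0 < a := pos_of_mul_pos_left (by linarith) (norm_nonneg x)
    have hconv := mul_norm_add_smul_le u x ha (le_add_of_nonneg_right hc)
    have hKu := hK u hu
    have hslope : (a + c) * (r - 1) ≤ a * (K - 1) := by nlinarith
    refine le_of_mul_le_mul_left ?_ ha0
    nlinarith [mul_le_mul_of_nonneg_left hslope hf0.le,
      mul_le_mul_of_nonneg_right haf (mul_nonneg hc (sub_nonneg.2 hr1.le))]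
  have hlim : (‖f‖ + c) * (1 + ‖f‖ * ‖x‖ - 1) ≤ ‖f‖ * (K - 1) :=
    ContinuousWithinAt.closure_le (f := fun r => (‖f‖ + c) * (r - 1))
      (by simp [closure_Ioo, hfx.ne', hfx.le]) (by fun_prop) continuousWithinAt_const key
  nlinarith

theorem one_add_add_mul_le_of_forall_le (hA : HasDaugavetWrt A) (hf : f ∈ A) (g : F →L[ℝ] ℝ)
    (x : E) {K : ℝ} (hK : ∀ u v, ‖u‖ ≤ 1 → ‖v‖ ≤ 1 → ‖u + (f u + g v) • x‖ ≤ K) :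
    1 + (‖f‖ + ‖g‖) * ‖x‖ ≤ K := by
  have key : ∀ r ∈ Iio ‖g‖, 1 + (‖f‖ + r) * ‖x‖ ≤ K := by
    intro r hr
    obtain ⟨v, hv, hgv, hrv⟩ := g.exists_nonneg_apply_and_lt_norm_apply g hr
    rw [Real.norm_of_nonneg hgv] at hrv
    calc 1 + (‖f‖ + r) * ‖x‖ ≤ 1 + (‖f‖ + g v) * ‖x‖ := by gcongr
      _ ≤ K := hA.one_add_mul_le_of_forall_le hf x hgv fun u hu => hK u v hu hv
  exact ContinuousWithinAt.closure_le (f := fun r => 1 + (‖f‖ + r) * ‖x‖) (by simp) (by fun_prop)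
    continuousWithinAt_const key

end HasDaugavetWrt

def normingValues (Y : Subspace ℝ (E →L[ℝ] ℝ)) (x : E) : Set ℝ :=
  {r | ∃ f ∈ Y, ‖f‖ ≤ 1 ∧ r = |f x|}

theorem zero_mem_normingValues (Y : Subspace ℝ (E →L[ℝ] ℝ)) (x : E) : 0 ∈ normingValues Y x :=
  ⟨0, Y.zero_mem, by simp, by simp⟩

theorem norm_mem_upperBounds_normingValues (Y : Subspace ℝ (E →L[ℝ] ℝ)) (x : E) :
    ‖x‖ ∈ upperBounds (normingValues Y x) := by
  rintro _ ⟨f, -, hf, rfl⟩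
  simpa using f.le_of_opNorm_le hf x

theorem IsNormingSubspace.of_le {Y : Subspace ℝ (E →L[ℝ] ℝ)}
    (h : ∀ x : E, ‖x‖ ≤ sSup (normingValues Y x)) : IsNormingSubspace Y := fun x =>
  (h x).antisymm <|
    csSup_le ⟨0, zero_mem_normingValues Y x⟩ (norm_mem_upperBounds_normingValues Y x)

noncomputable def prodDual (A : Subspace ℝ (E →L[ℝ] ℝ)) (B : Subspace ℝ (F →L[ℝ] ℝ)) :
    Subspace ℝ (E × F →L[ℝ] ℝ) :=
  A.comap (precomp ℝ (inl ℝ E F)).toLinearMap ⊓ B.comap (precomp ℝ (inr ℝ E F)).toLinearMap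

variable {A : Subspace ℝ (E →L[ℝ] ℝ)} {B : Subspace ℝ (F →L[ℝ] ℝ)}

theorem mem_prodDual {Φ : E × F →L[ℝ] ℝ} :
    Φ ∈ prodDual A B ↔ Φ.comp (inl ℝ E F) ∈ A ∧ Φ.comp (inr ℝ E F) ∈ B :=
  Iff.rfl

theorem comp_fst_mem_prodDual {f : E →L[ℝ] ℝ} (hf : f ∈ A) :
    f.comp (fst ℝ E F) ∈ prodDual A B := by
  rw [mem_prodDual]
  constructor
  · convert hf using 1; ext; simp
  · convert B.zero_mem using 1; ext; simp

theorem comp_snd_mem_prodDual {g : F →L[ℝ] ℝ} (hg : g ∈ B) :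
    g.comp (snd ℝ E F) ∈ prodDual A B := by
  rw [mem_prodDual]
  constructor
  · convert A.zero_mem using 1; ext; simp
  · convert hg using 1; ext; simp

theorem sSup_normingValues_mono {Y : Subspace ℝ (E →L[ℝ] ℝ)} {Y' : Subspace ℝ (F →L[ℝ] ℝ)}
    {x : E} {x' : F} (h : normingValues Y x ⊆ normingValues Y' x') :
    sSup (normingValues Y x) ≤ sSup (normingValues Y' x') :=
  csSup_le_csSup ⟨_, norm_mem_upperBounds_normingValues Y' x'⟩ ⟨0, zero_mem_normingValues Y x⟩ h

theorem normingValues_fst_subset (z : E × F) :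
    normingValues A z.1 ⊆ normingValues (prodDual A B) z := by
  rintro _ ⟨f, hf, hf1, rfl⟩
  exact ⟨f.comp (fst ℝ E F), comp_fst_mem_prodDual hf,
    (opNorm_comp_le _ _).trans (mul_le_one₀ hf1 (norm_nonneg _) (norm_fst_le ℝ E F)), rfl⟩

theorem normingValues_snd_subset (z : E × F) :
    normingValues B z.2 ⊆ normingValues (prodDual A B) z := by
  rintro _ ⟨g, hg, hg1, rfl⟩
  exact ⟨g.comp (snd ℝ E F), comp_snd_mem_prodDual hg,
    (opNorm_comp_le _ _).trans (mul_le_one₀ hg1 (norm_nonneg _) (norm_snd_le ℝ E F)), rfl⟩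

theorem IsNormingSubspace.prod (hA : IsNormingSubspace A) (hB : IsNormingSubspace B) :
    IsNormingSubspace (prodDual A B) :=
  .of_le fun z => max_le (hA z.1 ▸ sSup_normingValues_mono (normingValues_fst_subset z))
    (hB z.2 ▸ sSup_normingValues_mono (normingValues_snd_subset z))

theorem ContinuousLinearMap.opNorm_le_comp_inl_add_comp_inr (Φ : E × F →L[ℝ] ℝ) :
    ‖Φ‖ ≤ ‖Φ.comp (inl ℝ E F)‖ + ‖Φ.comp (inr ℝ E F)‖ := by
  refine opNorm_le_bound _ (by positivity) fun z => ?_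
  rw [← comp_inl_add_comp_inr, add_mul]
  refine (norm_add_le _ _).trans (add_le_add ?_ ?_)
  · exact (le_opNorm _ _).trans (by gcongr; exact _root_.norm_fst_le z)
  · exact (le_opNorm _ _).trans (by gcongr; exact _root_.norm_snd_le z)

theorem HasDaugavetWrt.prod (hA : HasDaugavetWrt A) (hB : HasDaugavetWrt B) :
    HasDaugavetWrt (prodDual A B) := by
  rintro ⟨x, y⟩ Φ hΦ
  obtain ⟨hf, hg⟩ := mem_prodDual.1 hΦ
  set f := Φ.comp (inl ℝ E F)
  set g := Φ.comp (inr ℝ E F)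
  set S := ContinuousLinearMap.id ℝ (E × F) + smulRight Φ (x, y)
  have hS : ∀ u v, ‖u‖ ≤ 1 → ‖v‖ ≤ 1 →
      ‖((u + (f u + g v) • x, v + (f u + g v) • y) : E × F)‖ ≤ ‖S‖ := by
    intro u v hu hv
    have hSuv : S (u, v) = (u + (f u + g v) • x, v + (f u + g v) • y) := by
      simp [S, f, g, ← comp_inl_add_comp_inr Φ (u, v)]
    exact hSuv ▸ S.unit_le_opNorm _ (max_le hu hv)
  have hlow : 1 + (‖f‖ + ‖g‖) * ‖(x, y)‖ ≤ ‖S‖ := by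
    rcases le_total ‖y‖ ‖x‖ with h | h
    · rw [Prod.norm_mk, max_eq_left h]
      exact hA.one_add_add_mul_le_of_forall_le hf g x fun u v hu hv =>
        (_root_.norm_fst_le _).trans (hS u v hu hv)
    · rw [Prod.norm_mk, max_eq_right h, add_comm ‖f‖]
      refine hB.one_add_add_mul_le_of_forall_le hg f y fun v u hv hu => ?_
      rw [add_comm (g v)]
      exact (_root_.norm_snd_le _).trans (hS u v hu hv)
  refine (norm_id_add_smulRight_le Φ (x, y)).antisymm ?_
  rw [norm_smulRight_apply]
  calc 1 + ‖Φ‖ * ‖(x, y)‖ ≤ 1 + (‖f‖ + ‖g‖) * ‖(x, y)‖ := by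
        gcongr; exact Φ.opNorm_le_comp_inl_add_comp_inr
    _ ≤ ‖S‖ := hlow

end

theorem stmt_5_general {X Y : Type*} [NormedAddCommGroup X] [NormedSpace ℝ X]
    [NormedAddCommGroup Y] [NormedSpace ℝ Y]
    (hX : AlmostDaugavet X) (hY : AlmostDaugavet Y) :
    AlmostDaugavet (X × Y) := by
  obtain ⟨A, hAn, hAd⟩ := hX
  obtain ⟨B, hBn, hBd⟩ := hY
  exact ⟨prodDual A B, hAn.prod hBn, hAd.prod hBd⟩

/-- `X × Y` carries the sup norm, i.e. it is the ℓ∞-sum `X ⊕_∞ Y`. -/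
theorem stmt_5 {X Y : Type*} [NormedAddCommGroup X] [NormedSpace ℝ X]
    [CompleteSpace X] [TopologicalSpace.SeparableSpace X]
    [NormedAddCommGroup Y] [NormedSpace ℝ Y]
    [CompleteSpace Y] [TopologicalSpace.SeparableSpace Y]
    (hX : AlmostDaugavet X) (hY : AlmostDaugavet Y) :
    AlmostDaugavet (X × Y) :=
  stmt_5_general hX hY
end

section
/- Let X be a Banach space that decomposes as an L-sum X = J ⊕_1 Ĵ of two closed subspaces (i.e., ‖j + ĵ‖ = ‖j‖ + ‖ĵ‖ for all j ∈ J, ĵ ∈ Ĵ). If T(J) < 2 and T(Ĵ) < 2, then T(X) < 2, where T denotes the thickness: T(Z) = inf{ε > 0 : the unit sphere S_Z admits a finite subset F ⊂ S_Z such that every z ∈ S_Z is within distance ε of F}. -/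
/-- `F` is a finite inner `ε`-net of the unit sphere of `Z`. -/
def IsInnerNet {Z : Type*} [NormedAddCommGroup Z] (F : Finset Z) (ε : ℝ) : Prop :=
  (∀ y ∈ F, ‖y‖ = 1) ∧ ∀ x : Z, ‖x‖ = 1 → ∃ y ∈ F, ‖x - y‖ ≤ ε

/-- The thickness `T(Z)` of a normed space. -/
noncomputable def thickness (Z : Type*) [NormedAddCommGroup Z] : ℝ :=
  sInf {ε : ℝ | 0 < ε ∧ ∃ F : Finset Z, IsInnerNet F ε}

/-!
Take inner `ε`-nets `F₁` of `S_J` and `F₂` of `S_Ĵ` with `ε < 2`. A unit vector of `X` is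
`j + ĵ` with `‖j‖ + ‖ĵ‖ = 1`; approximating `j / ‖j‖` by `y ∈ F₁`, `ĵ / ‖ĵ‖` by `w ∈ F₂` and
`‖j‖` by `t` on the grid `{0, 1/N, …, 1}`, the L-sum norm makes `t y + (1 - t) w` a unit vector
at distance at most `ε + 2/N` from `j + ĵ`. So `S_X` has a finite inner `(ε + 2/N)`-net, and
`ε + 2/N < 2` for `N` large.
-/

section Thickness

variable {Z : Type*} [NormedAddCommGroup Z]

theorem IsInnerNet.mono {F : Finset Z} {ε ε' : ℝ} (hF : IsInnerNet F ε) (h : ε ≤ ε') :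
    IsInnerNet F ε' :=
  ⟨hF.1, fun x hx => (hF.2 x hx).imp fun _ ⟨hy, hxy⟩ => ⟨hy, hxy.trans h⟩⟩

theorem exists_isInnerNet_two : ∃ F : Finset Z, IsInnerNet F 2 := by
  by_cases h : ∃ z : Z, ‖z‖ = 1
  · obtain ⟨z, hz⟩ := h
    refine ⟨{z}, by simpa using hz, fun x hx => ⟨z, Finset.mem_singleton_self z, ?_⟩⟩
    linarith [norm_sub_le x z]
  · push Not at h
    exact ⟨∅, by simp, fun x hx => absurd hx (h x)⟩

theorem thickness_le {F : Finset Z} {ε : ℝ} (hε : 0 < ε) (hF : IsInnerNet F ε) :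
    thickness Z ≤ ε := by
  unfold thickness
  exact csInf_le ⟨0, fun _ h => h.1.le⟩ ⟨hε, F, hF⟩

theorem exists_isInnerNet_of_thickness_lt {c : ℝ} (h : thickness Z < c) :
    ∃ ε < c, 0 < ε ∧ ∃ F : Finset Z, IsInnerNet F ε := by
  obtain ⟨F, hF⟩ := exists_isInnerNet_two (Z := Z)
  obtain ⟨ε, ⟨hε0, hεF⟩, hεc⟩ := exists_lt_of_csInf_lt (by exact ⟨2, two_pos, F, hF⟩) h
  exact ⟨ε, hεc, hε0, hεF⟩

variable [NormedSpace ℝ Z]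

theorem IsInnerNet.exists_norm_sub_smul_le {F : Finset Z} {ε : ℝ} (hF : IsInnerNet F ε)
    {z : Z} (hz : z ≠ 0) : ∃ y ∈ F, ‖z - ‖z‖ • y‖ ≤ ‖z‖ * ε := by
  have hz' : 0 < ‖z‖ := norm_pos_iff.2 hz
  obtain ⟨y, hy, hzy⟩ := hF.2 (‖z‖⁻¹ • z) (norm_smul_inv_norm hz)
  refine ⟨y, hy, ?_⟩
  calc ‖z - ‖z‖ • y‖ = ‖‖z‖ • (‖z‖⁻¹ • z - y)‖ := by rw [smul_sub, smul_inv_smul₀ hz'.ne']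
    _ = ‖z‖ * ‖‖z‖⁻¹ • z - y‖ := by rw [norm_smul, norm_norm]
    _ ≤ ‖z‖ * ε := by gcongr

theorem norm_sub_smul_le_of_norm_eq_one {y : Z} (hy : ‖y‖ = 1) (z : Z) (t : ℝ) :
    ‖z - t • y‖ ≤ ‖z - ‖z‖ • y‖ + |‖z‖ - t| :=
  calc ‖z - t • y‖ = ‖(z - ‖z‖ • y) + (‖z‖ - t) • y‖ := by congr 1; module
    _ ≤ ‖z - ‖z‖ • y‖ + ‖(‖z‖ - t) • y‖ := norm_add_le _ _
    _ = ‖z - ‖z‖ • y‖ + |‖z‖ - t| := by rw [norm_smul, hy, mul_one, Real.norm_eq_abs]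

end Thickness

theorem exists_mem_range_abs_sub_div_le {a : ℝ} (ha0 : 0 ≤ a) (ha1 : a ≤ 1) {N : ℕ}
    (hN : 0 < N) : ∃ i ∈ Finset.range (N + 1), |a - i / N| ≤ 1 / N := by
  have hN' : (0 : ℝ) < N := by exact_mod_cast hN
  refine ⟨⌊a * N⌋₊, Finset.mem_range_succ_iff.2 (Nat.floor_le_of_le (by nlinarith)), ?_⟩
  have hlo : (⌊a * N⌋₊ : ℝ) ≤ a * N := Nat.floor_le (by positivity)
  have hhi : a * N < ⌊a * N⌋₊ + 1 := Nat.lt_floor_add_one _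
  have hdiff : a - ⌊a * N⌋₊ / N = (a * N - ⌊a * N⌋₊) / N := by field_simp
  rw [hdiff, abs_div, abs_of_pos hN', div_le_div_iff_of_pos_right hN', abs_le]
  constructor <;> linarith

section LSum

variable {X : Type*} [NormedAddCommGroup X] [NormedSpace ℝ X] {J Jhat : Submodule ℝ X}

theorem norm_smul_add_smul_eq_one (hL : ∀ j ∈ J, ∀ jh ∈ Jhat, ‖j + jh‖ = ‖j‖ + ‖jh‖)
    {y w : X} (hy : y ∈ J) (hw : w ∈ Jhat) (hy1 : ‖y‖ = 1) (hw1 : ‖w‖ = 1)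
    {t : ℝ} (ht0 : 0 ≤ t) (ht1 : t ≤ 1) : ‖t • y + (1 - t) • w‖ = 1 := by
  rw [hL _ (J.smul_mem t hy) _ (Jhat.smul_mem _ hw), norm_smul, norm_smul, hy1, hw1,
    Real.norm_of_nonneg ht0, Real.norm_of_nonneg (sub_nonneg.2 ht1)]
  ring

theorem norm_add_sub_smul_add_smul_le (hL : ∀ j ∈ J, ∀ jh ∈ Jhat, ‖j + jh‖ = ‖j‖ + ‖jh‖)
    {j jh y w : X} (hj : j ∈ J) (hjh : jh ∈ Jhat) (hy : y ∈ J) (hw : w ∈ Jhat)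
    (hy1 : ‖y‖ = 1) (hw1 : ‖w‖ = 1) (hx : ‖j + jh‖ = 1) {ε t : ℝ}
    (hjy : ‖j - ‖j‖ • y‖ ≤ ‖j‖ * ε) (hjhw : ‖jh - ‖jh‖ • w‖ ≤ ‖jh‖ * ε) :
    ‖j + jh - (t • y + (1 - t) • w)‖ ≤ ε + 2 * |‖j‖ - t| := by
  have hjh_norm : ‖jh‖ = 1 - ‖j‖ := by linarith [hL j hj jh hjh]
  have hsplit : j + jh - (t • y + (1 - t) • w) = (j - t • y) + (jh - (1 - t) • w) := by abel
  have hj' := norm_sub_smul_le_of_norm_eq_one hy1 j t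
  have hjh' := norm_sub_smul_le_of_norm_eq_one hw1 jh (1 - t)
  have habs : |‖jh‖ - (1 - t)| = |‖j‖ - t| := by
    rw [hjh_norm, show 1 - ‖j‖ - (1 - t) = -(‖j‖ - t) by ring, abs_neg]
  have hε : ‖j‖ * ε + ‖jh‖ * ε = ε := by rw [hjh_norm]; ring
  rw [habs] at hjh'
  rw [hsplit, hL _ (J.sub_mem hj (J.smul_mem t hy)) _ (Jhat.sub_mem hjh (Jhat.smul_mem _ hw))]
  linarith

/-- The first two pieces are only needed when `J` or `Jhat` is trivial, as `F₁` or `F₂` may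
then be empty. -/
noncomputable def lSumNet [DecidableEq X] (F₁ : Finset J) (F₂ : Finset Jhat) (N : ℕ) :
    Finset X :=
  F₁.image (↑) ∪ F₂.image (↑) ∪ (Finset.range (N + 1) ×ˢ F₁ ×ˢ F₂).image
    fun p => ((p.1 : ℝ) / N) • (p.2.1 : X) + (1 - (p.1 : ℝ) / N) • (p.2.2 : X)

variable [DecidableEq X] {F₁ : Finset J} {F₂ : Finset Jhat} {ε : ℝ} {N : ℕ}

theorem norm_eq_one_of_mem_lSumNet (hL : ∀ j ∈ J, ∀ jh ∈ Jhat, ‖j + jh‖ = ‖j‖ + ‖jh‖)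
    (hF₁ : IsInnerNet F₁ ε) (hF₂ : IsInnerNet F₂ ε) {x : X} (hx : x ∈ lSumNet F₁ F₂ N) :
    ‖x‖ = 1 := by
  simp only [lSumNet, Finset.mem_union, Finset.mem_image, Finset.mem_product,
    Finset.mem_range] at hx
  rcases hx with (⟨y, hy, rfl⟩ | ⟨w, hw, rfl⟩) | ⟨⟨i, y, w⟩, ⟨hi, hy, hw⟩, rfl⟩
  · exact hF₁.1 y hy
  · exact hF₂.1 w hw
  · have hiN : (i : ℝ) ≤ N := by exact_mod_cast Nat.lt_succ_iff.mp hi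
    exact norm_smul_add_smul_eq_one hL y.2 w.2 (hF₁.1 y hy) (hF₂.1 w hw) (by positivity)
      (div_le_one_of_le₀ hiN (Nat.cast_nonneg N))

theorem exists_mem_lSumNet_norm_sub_le (hL : ∀ j ∈ J, ∀ jh ∈ Jhat, ‖j + jh‖ = ‖j‖ + ‖jh‖)
    (hF₁ : IsInnerNet F₁ ε) (hF₂ : IsInnerNet F₂ ε) (hN : 0 < N) {j jh : X} (hj : j ∈ J)
    (hjh : jh ∈ Jhat) (hx : ‖j + jh‖ = 1) :
    ∃ z ∈ lSumNet F₁ F₂ N, ‖j + jh - z‖ ≤ ε + 2 / N := by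
  have h2N : 0 ≤ 2 / (N : ℝ) := by positivity
  simp only [lSumNet, Finset.mem_union, Finset.mem_image, Finset.mem_product,
    Finset.mem_range, Prod.exists]
  by_cases hj0 : j = 0
  · subst hj0
    obtain ⟨w, hw, hjhw⟩ := hF₂.2 ⟨jh, hjh⟩ (by simpa using hx)
    exact ⟨w, Or.inl (Or.inr ⟨w, hw, rfl⟩), by simpa using hjhw.trans (le_add_of_nonneg_right h2N)⟩
  by_cases hjh0 : jh = 0
  · subst hjh0
    obtain ⟨y, hy, hjy⟩ := hF₁.2 ⟨j, hj⟩ (by simpa using hx)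
    exact ⟨y, Or.inl (Or.inl ⟨y, hy, rfl⟩), by simpa using hjy.trans (le_add_of_nonneg_right h2N)⟩
  obtain ⟨y, hy, hjy⟩ := hF₁.exists_norm_sub_smul_le (z := ⟨j, hj⟩) (by simpa using hj0)
  obtain ⟨w, hw, hjhw⟩ := hF₂.exists_norm_sub_smul_le (z := ⟨jh, hjh⟩) (by simpa using hjh0)
  have hj1 : ‖j‖ ≤ 1 := by linarith [hL j hj jh hjh, norm_nonneg jh]
  obtain ⟨i, hi, hji⟩ := exists_mem_range_abs_sub_div_le (norm_nonneg j) hj1 hN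
  refine ⟨_, Or.inr ⟨i, y, w, ⟨Finset.mem_range.1 hi, hy, hw⟩, rfl⟩, ?_⟩
  have := norm_add_sub_smul_add_smul_le (t := i / N) hL hj hjh y.2 w.2 (hF₁.1 y hy)
    (hF₂.1 w hw) hx (by simpa using hjy) (by simpa using hjhw)
  have h2 : 2 / (N : ℝ) = 2 * (1 / N) := by ring
  linarith

theorem isInnerNet_lSumNet (hsum : ∀ x : X, ∃ j ∈ J, ∃ jh ∈ Jhat, x = j + jh)
    (hL : ∀ j ∈ J, ∀ jh ∈ Jhat, ‖j + jh‖ = ‖j‖ + ‖jh‖)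
    (hF₁ : IsInnerNet F₁ ε) (hF₂ : IsInnerNet F₂ ε) (hN : 0 < N) :
    IsInnerNet (lSumNet F₁ F₂ N) (ε + 2 / N) := by
  refine ⟨fun x hx => norm_eq_one_of_mem_lSumNet hL hF₁ hF₂ hx, fun x hx => ?_⟩
  obtain ⟨j, hj, jh, hjh, rfl⟩ := hsum x
  exact exists_mem_lSumNet_norm_sub_le hL hF₁ hF₂ hN hj hjh hx

end LSum

theorem stmt_7_general {X : Type*} [NormedAddCommGroup X] [NormedSpace ℝ X]
    (J Jhat : Subspace ℝ X)
    (hsum : ∀ x : X, ∃ j ∈ J, ∃ jh ∈ Jhat, x = j + jh)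
    (hL : ∀ j ∈ J, ∀ jh ∈ Jhat, ‖j + jh‖ = ‖j‖ + ‖jh‖)
    (hTJ : thickness J < 2) (hTJh : thickness Jhat < 2) :
    thickness X < 2 := by
  classical
  obtain ⟨ε₁, hε₁2, hε₁0, F₁, hF₁⟩ := exists_isInnerNet_of_thickness_lt hTJ
  obtain ⟨ε₂, hε₂2, -, F₂, hF₂⟩ := exists_isInnerNet_of_thickness_lt hTJh
  set ε := max ε₁ ε₂
  have hε2 : 0 < 2 - ε := sub_pos.2 (max_lt hε₁2 hε₂2)
  obtain ⟨N, hN⟩ := exists_nat_gt (2 / (2 - ε))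
  have hN0 : (0 : ℝ) < N := (div_pos two_pos hε2).trans hN
  have hnet := isInnerNet_lSumNet hsum hL (hF₁.mono (le_max_left ε₁ ε₂))
    (hF₂.mono (le_max_right ε₁ ε₂)) (Nat.cast_pos.1 hN0)
  have hgrid : 2 / (N : ℝ) < 2 - ε := by rwa [div_lt_comm₀ hN0 hε2]
  calc thickness X ≤ ε + 2 / N :=
        thickness_le (add_pos_of_pos_of_nonneg (hε₁0.trans_le (le_max_left ε₁ ε₂))
          (by positivity)) hnet
    _ < 2 := by linarith

theorem stmt_7 {X : Type*} [NormedAddCommGroup X] [NormedSpace ℝ X] [CompleteSpace X]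
    (J Jhat : Subspace ℝ X) (hJc : IsClosed (J : Set X)) (hJhc : IsClosed (Jhat : Set X))
    (hsum : ∀ x : X, ∃ j ∈ J, ∃ jh ∈ Jhat, x = j + jh)
    (hdisj : J ⊓ Jhat = ⊥)
    (hL : ∀ j ∈ J, ∀ jh ∈ Jhat, ‖j + jh‖ = ‖j‖ + ‖jh‖)
    (hTJ : thickness J < 2) (hTJh : thickness Jhat < 2) :
    thickness X < 2 :=
  stmt_7_general J Jhat hsum hL hTJ hTJh
end

section
/- For 1 ≤ p < ∞, the thickness of ℓ_p equals 2^{1/p}: T(ℓ_p) = 2^{1/p}. -/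
/-!
Write `q = p.toReal` and `e i` for the unit vectors. Changing the `i`-th coordinate of `f` only
changes the `i`-th term of `‖f‖ ^ q = ∑ ‖f j‖ ^ q`. Hence a unit vector `x` with `0 ≤ x i` satisfies
`‖x - e i‖ ^ q = (1 - x i) ^ q + 1 - x i ^ q ≤ 2`, so `{e i, -e i}` is a `2 ^ (1 / q)`-net.
Conversely, finitely many vectors `y` of `ℓ_p` are all small at some far coordinate `N`, and there
`‖e N - y‖ ^ q ≈ 1 + ‖y‖ ^ q = 2`.
-/

open Filter Topology
open scoped ENNReal

namespace lp

section General

variable {α : Type*} {E : α → Type*} [∀ i, NormedAddCommGroup (E i)] {p : ℝ≥0∞}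

theorem norm_sub_single_rpow [DecidableEq α] (hp : 0 < p.toReal) (f : lp E p) (i : α) (a : E i) :
    ‖f - lp.single p i a‖ ^ p.toReal =
      ‖f i - a‖ ^ p.toReal + (‖f‖ ^ p.toReal - ‖f i‖ ^ p.toReal) := by
  have hsplit (g : lp E p) :
      ‖g‖ ^ p.toReal = ‖g i‖ ^ p.toReal + ∑' j, if j = i then 0 else ‖g j‖ ^ p.toReal := by
    rw [norm_rpow_eq_tsum hp, ((lp.memℓp g).summable hp).tsum_eq_add_tsum_ite i]
  have htail : (fun j => if j = i then 0 else ‖(f - lp.single p i a) j‖ ^ p.toReal) =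
      fun j => if j = i then 0 else ‖f j‖ ^ p.toReal := by
    funext j
    split_ifs with hj
    · rfl
    · simp [hj]
  rw [hsplit, htail, hsplit f]
  simp

theorem tendsto_norm_cofinite_zero (hp : 0 < p.toReal) (f : lp E p) :
    Tendsto (fun i => ‖f i‖) cofinite (𝓝 0) := by
  have h := ((lp.memℓp f).summable hp).tendsto_cofinite_zero.rpow_const
    (p := p.toReal⁻¹) (Or.inr (inv_nonneg.2 hp.le))
  rw [Real.zero_rpow (inv_ne_zero hp.ne')] at h
  exact h.congr fun i => Real.rpow_rpow_inv (norm_nonneg _) hp.ne'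

end General

section Real

variable {α : Type*} [DecidableEq α] {p : ℝ≥0∞} [Fact (1 ≤ p)]

theorem norm_single_one (i : α) : ‖lp.single (E := fun _ : α => ℝ) p i 1‖ = 1 := by
  simpa using lp.norm_single (E := fun _ : α => ℝ) (zero_lt_one.trans_le Fact.out) i (1 : ℝ)

theorem norm_sub_single_one_le_of_nonneg (hp : 0 < p.toReal) {x : lp (fun _ : α => ℝ) p}
    (hx : ‖x‖ = 1) {i : α} (hxi : 0 ≤ x i) :
    ‖x - lp.single p i (1 : ℝ)‖ ≤ (2 : ℝ) ^ (1 / p.toReal) := by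
  have hxi_le : x i ≤ 1 := by
    simpa [hx, abs_of_nonneg hxi] using norm_apply_le_norm (zero_lt_one.trans_le Fact.out).ne' x i
  rw [one_div, Real.le_rpow_inv_iff_of_pos (norm_nonneg _) zero_le_two hp, norm_sub_single_rpow hp,
    hx, Real.one_rpow, Real.norm_eq_abs, Real.norm_eq_abs, abs_of_nonneg hxi, abs_sub_comm,
    abs_of_nonneg (sub_nonneg.2 hxi_le)]
  have h1 : (1 - x i) ^ p.toReal ≤ 1 :=
    Real.rpow_le_one (sub_nonneg.2 hxi_le) (sub_le_self _ hxi) hp.le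
  have h2 : 0 ≤ x i ^ p.toReal := Real.rpow_nonneg hxi _
  linarith

open Classical in
theorem isInnerNet_single_one_neg (hp : 0 < p.toReal) (i : α) :
    IsInnerNet {lp.single (E := fun _ : α => ℝ) p i 1, -lp.single (E := fun _ : α => ℝ) p i 1}
      ((2 : ℝ) ^ (1 / p.toReal)) := by
  refine ⟨by simp [norm_single_one], fun x hx => ?_⟩
  by_cases hxi : 0 ≤ x i
  · exact ⟨_, by simp, norm_sub_single_one_le_of_nonneg hp hx hxi⟩
  · refine ⟨-lp.single p i (1 : ℝ), by simp, ?_⟩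
    have h := norm_sub_single_one_le_of_nonneg hp (x := -x) (i := i) (by rwa [norm_neg])
      (by simp; linarith)
    rwa [← norm_neg, show -(x - -lp.single p i (1 : ℝ)) = -x - lp.single p i 1 by abel]

theorem rpow_one_div_le_of_isInnerNet [Infinite α] (hp : 0 < p.toReal)
    {F : Finset (lp (fun _ : α => ℝ) p)} {ε : ℝ} (hF : IsInnerNet F ε) :
    (2 : ℝ) ^ (1 / p.toReal) ≤ ε := by
  set q := p.toReal
  have hbound : ∀ η ∈ Set.Ioo (0 : ℝ) 1, (1 - η) ^ q + (1 - η ^ q) ≤ ε ^ q := by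
    rintro η ⟨hη0, hη1⟩
    obtain ⟨N, hN⟩ : ∃ N, ∀ y ∈ F, ‖y N‖ ≤ η :=
      ((eventually_all_finset F).2 fun y _ =>
        ((tendsto_norm_cofinite_zero hp y).eventually_lt_const hη0).mono fun _ => le_of_lt).exists
    obtain ⟨y, hyF, hy⟩ := hF.2 _ (norm_single_one N)
    have hyN : ‖y N‖ ≤ η := hN y hyF
    have hyN_sub : 1 - η ≤ ‖y N - 1‖ :=
      calc 1 - η ≤ ‖(1 : ℝ)‖ - ‖y N‖ := by rw [norm_one]; linarith
        _ ≤ ‖y N - 1‖ := by rw [norm_sub_rev]; exact norm_sub_norm_le _ _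
    calc (1 - η) ^ q + (1 - η ^ q)
        ≤ ‖y N - 1‖ ^ q + (1 - ‖y N‖ ^ q) := by gcongr
      _ = ‖y - lp.single p N (1 : ℝ)‖ ^ q := by
          rw [norm_sub_single_rpow hp, hF.1 y hyF, Real.one_rpow]
      _ ≤ ε ^ q := by
          rw [norm_sub_rev]
          gcongr
  have hcont : ContinuousAt (fun η : ℝ => (1 - η) ^ q + (1 - η ^ q)) 0 := by
    fun_prop (disch := first | positivity | norm_num)
  have htwo : 2 ≤ ε ^ q := by
    refine le_of_tendsto (x := 𝓝[>] 0) ?_ (eventually_of_mem (Ioo_mem_nhdsGT one_pos) hbound)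
    convert hcont.tendsto.mono_left nhdsWithin_le_nhds using 2
    norm_num [Real.zero_rpow hp.ne']
  have hε : 0 ≤ ε := by
    obtain ⟨y, -, hy⟩ := hF.2 _ (norm_single_one (Classical.arbitrary α))
    exact (norm_nonneg _).trans hy
  rwa [one_div, Real.rpow_inv_le_iff_of_pos zero_le_two hε hp]

theorem thickness_eq [Infinite α] (hp : p ≠ ⊤) :
    thickness (lp (fun _ : α => ℝ) p) = (2 : ℝ) ^ (1 / p.toReal) := by
  have hq : 0 < p.toReal := ENNReal.toReal_pos (zero_lt_one.trans_le Fact.out).ne' hp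
  refine IsLeast.csInf_eq ⟨⟨by positivity, _, isInnerNet_single_one_neg hq (Classical.arbitrary α)⟩, ?_⟩
  rintro ε ⟨-, F, hF⟩
  exact rpow_one_div_le_of_isInnerNet hq hF

end Real

end lp

theorem stmt_15 (p : ENNReal) [Fact (1 ≤ p)] (hp : p ≠ ⊤) :
    thickness (lp (fun _ : ℕ => ℝ) p) = (2 : ℝ) ^ (1 / p.toReal) :=
  lp.thickness_eq hp
end

section
/- Let X be a separable Banach space admitting a sequence (e_n) in its closed unit ball with lim_{n→∞} ‖x + e_n‖ = ‖x‖ + 1 for all x ∈ X. Then the unit sphere S_X admits no finite inner ε-net for any ε < 2, i.e., T(X) = 2. -/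
/-! Normalising the sequence `e n` moves it by `|1 - ‖e n‖| → 0`, so the normalised sequence
still satisfies `‖x + u n‖ → ‖x‖ + 1`. For a finite set `F` of unit vectors, eventually every
`y ∈ F` is more than `ε < 2` away from the unit vector `-u n`, so `F` is not an inner `ε`-net. -/

open Filter Topology

section InnerNet

variable {Z : Type*} [NormedAddCommGroup Z]

theorem isInnerNet_singleton_two {z : Z} (hz : ‖z‖ = 1) : IsInnerNet {z} 2 := by
  refine ⟨by simpa using hz, fun x hx => ⟨z, Finset.mem_singleton_self z, ?_⟩⟩
  calc ‖x - z‖ ≤ ‖x‖ + ‖z‖ := norm_sub_le x z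
    _ = 2 := by rw [hx, hz]; norm_num

theorem not_isInnerNet_of_tendsto_norm_add {ι : Type*} {l : Filter ι} [l.NeBot] {u : ι → Z}
    (hu : ∀ᶠ i in l, ‖u i‖ = 1) (hlim : ∀ y : Z, ‖y‖ = 1 → Tendsto (fun i => ‖y + u i‖) l (𝓝 2))
    (F : Finset Z) {ε : ℝ} (hε : ε < 2) : ¬ IsInnerNet F ε := by
  rintro ⟨hF, hnet⟩
  have hfar : ∀ᶠ i in l, ∀ y ∈ F, ε < ‖y + u i‖ :=
    (eventually_all_finset F).2 fun y hy => (hlim y (hF y hy)).eventually_const_lt hε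
  obtain ⟨i, hfar, hui⟩ := (hfar.and hu).exists
  obtain ⟨y, hyF, hy⟩ := hnet (-u i) (by rw [norm_neg, hui])
  have : ‖-u i - y‖ = ‖y + u i‖ := by rw [← norm_neg, neg_sub, sub_neg_eq_add]
  exact (hfar y hyF).not_ge (this ▸ hy)

theorem thickness_eq_two {z : Z} (hz : ‖z‖ = 1)
    (h : ∀ ε : ℝ, ε < 2 → ¬ ∃ F : Finset Z, IsInnerNet F ε) : thickness Z = 2 := by
  have h2 : (2 : ℝ) ∈ {ε : ℝ | 0 < ε ∧ ∃ F : Finset Z, IsInnerNet F ε} :=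
    ⟨two_pos, {z}, isInnerNet_singleton_two hz⟩
  refine le_antisymm (csInf_le ⟨0, fun ε hε => hε.1.le⟩ h2) (le_csInf ⟨2, h2⟩ ?_)
  rintro ε ⟨-, hF⟩
  by_contra! hε
  exact h ε hε hF

end InnerNet

section Normalize

variable {X : Type*} [NormedAddCommGroup X] [NormedSpace ℝ X]

theorem norm_inv_norm_smul_sub_le (v : X) : ‖‖v‖⁻¹ • v - v‖ ≤ |1 - ‖v‖| := by
  rcases eq_or_ne v 0 with rfl | hv
  · simp
  have hv' : 0 < ‖v‖ := norm_pos_iff.2 hv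
  refine le_of_eq ?_
  calc ‖‖v‖⁻¹ • v - v‖ = |‖v‖⁻¹ - 1| * ‖v‖ := by
        rw [← Real.norm_eq_abs, ← norm_smul, sub_smul, one_smul]
    _ = |1 - ‖v‖| := by
        rw [← abs_of_pos hv', ← abs_mul, abs_of_pos hv', sub_one_mul, inv_mul_cancel₀ hv'.ne',
          abs_sub_comm]

theorem tendsto_norm_add_inv_norm_smul {ι : Type*} {l : Filter ι} {e : ι → X} {x : X} {a : ℝ}
    (hx : Tendsto (fun i => ‖x + e i‖) l (𝓝 a)) (he : Tendsto (fun i => ‖e i‖) l (𝓝 1)) :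
    Tendsto (fun i => ‖x + ‖e i‖⁻¹ • e i‖) l (𝓝 a) := by
  refine hx.congr_dist <|
    squeeze_zero (g := fun i => |1 - ‖e i‖|) (fun _ => dist_nonneg) (fun i => ?_) ?_
  · calc dist ‖x + e i‖ ‖x + ‖e i‖⁻¹ • e i‖ ≤ ‖x + e i - (x + ‖e i‖⁻¹ • e i)‖ :=
          dist_norm_norm_le _ _
      _ = ‖‖e i‖⁻¹ • e i - e i‖ := by rw [add_sub_add_left_eq_sub, norm_sub_rev]
      _ ≤ |1 - ‖e i‖| := norm_inv_norm_smul_sub_le (e i)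
  · simpa using ((tendsto_const_nhds (x := (1 : ℝ))).sub he).abs

end Normalize

theorem stmt_16_general {X : Type*} [NormedAddCommGroup X] [NormedSpace ℝ X]
    (e : ℕ → X)
    (hlim : ∀ x : X, Filter.Tendsto (fun n => ‖x + e n‖) Filter.atTop (nhds (‖x‖ + 1))) :
    (∀ ε : ℝ, ε < 2 → ¬ ∃ F : Finset X, IsInnerNet F ε) ∧ thickness X = 2 := by
  have he : Tendsto (fun n => ‖e n‖) atTop (𝓝 1) := by simpa using hlim 0
  set u : ℕ → X := fun n => ‖e n‖⁻¹ • e n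
  have hu : ∀ᶠ n in atTop, ‖u n‖ = 1 :=
    (he.eventually_const_lt zero_lt_one).mono fun n hn =>
      norm_smul_inv_norm (𝕜 := ℝ) (norm_pos_iff.1 hn)
  have hu_lim (y : X) (hy : ‖y‖ = 1) : Tendsto (fun n => ‖y + u n‖) atTop (𝓝 2) := by
    have := tendsto_norm_add_inv_norm_smul (hlim y) he
    rwa [hy, one_add_one_eq_two] at this
  have hnet (ε : ℝ) (hε : ε < 2) : ¬ ∃ F : Finset X, IsInnerNet F ε :=
    fun ⟨F, hF⟩ => not_isInnerNet_of_tendsto_norm_add hu hu_lim F hε hF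
  obtain ⟨n, hn⟩ := hu.exists
  exact ⟨hnet, thickness_eq_two hn hnet⟩

theorem stmt_16 {X : Type*} [NormedAddCommGroup X] [NormedSpace ℝ X]
    [CompleteSpace X] [TopologicalSpace.SeparableSpace X]
    (e : ℕ → X) (he : ∀ n, ‖e n‖ ≤ 1)
    (hlim : ∀ x : X, Filter.Tendsto (fun n => ‖x + e n‖) Filter.atTop (nhds (‖x‖ + 1))) :
    (∀ ε : ℝ, ε < 2 → ¬ ∃ F : Finset X, IsInnerNet F ε) ∧ thickness X = 2 :=
  stmt_16_general e hlim
end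

section
/- Let X be a separable Banach space whose unit sphere S_X admits no finite inner ε-net consisting of elements of S_X for any ε < 2. Then there exists a sequence (e_n) in the closed unit ball of X such that for every x ∈ X, lim_{n→∞} ‖x + e_n‖ = ‖x‖ + 1. -/
/-!
Write a point of a finite set as `x = t • u` with `‖u‖ = 1`. Since no finite set of unit vectors
is an inner `ε`-net for `ε < 2`, some unit vector `e` satisfies `‖u + e‖ > 2 - η` simultaneously
for the finitely many `-u`, and then `‖x + e‖ ≥ ‖x‖ + 1 - max ‖x‖ 1 * η`. Doing this for the first
`n` terms of a dense sequence with `η → 0` yields `e n` with `‖x + e n‖ → ‖x‖ + 1` on a dense set;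
as the maps `x ↦ ‖x + e n‖` are all `1`-Lipschitz, the convergence extends to every `x`.
-/

open Filter Topology

section

variable {X : Type*} [NormedAddCommGroup X]

lemma exists_forall_lt_norm_sub_of_not_isInnerNet {F : Finset X} {ε : ℝ}
    (hF : ∀ y ∈ F, ‖y‖ = 1) (h : ¬ IsInnerNet F ε) :
    ∃ e : X, ‖e‖ = 1 ∧ ∀ y ∈ F, ε < ‖e - y‖ := by
  unfold IsInnerNet at h
  push Not at h
  exact h hF

lemma isClosed_setOf_tendsto_norm_add (e : ℕ → X) (c : ℝ) :
    IsClosed {x : X | Tendsto (fun n => ‖x + e n‖) atTop (𝓝 (‖x‖ + c))} := by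
  refine Equicontinuous.isClosed_setOfPred_tendsto (F := fun n x => ‖x + e n‖) ?_
    (continuous_norm.add continuous_const)
  refine (LipschitzWith.uniformEquicontinuous _ 1 fun n => ?_).equicontinuous
  exact LipschitzWith.of_dist_le_mul fun x y => by
    simpa [Real.dist_eq, dist_eq_norm] using abs_norm_sub_norm_le (x + e n) (y + e n)

variable [NormedSpace ℝ X]

lemma le_norm_smul_add_of_norm_eq_one {u e : X} (hu : ‖u‖ = 1) (he : ‖e‖ = 1) {t : ℝ}
    (ht : 0 ≤ t) : t + 1 - max t 1 * (2 - ‖u + e‖) ≤ ‖t • u + e‖ := by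
  rcases le_total t 1 with ht1 | ht1
  · have : ‖u + e‖ ≤ ‖t • u + e‖ + ‖(1 - t) • u‖ :=
      (congrArg norm (by rw [sub_smul, one_smul]; abel)).trans_le (norm_add_le _ _)
    rw [norm_smul, hu, Real.norm_of_nonneg (by linarith)] at this
    rw [max_eq_right ht1]
    linarith
  · have : ‖t • (u + e)‖ ≤ ‖t • u + e‖ + ‖(t - 1) • e‖ :=
      (congrArg norm (by rw [smul_add, sub_smul, one_smul]; abel)).trans_le (norm_add_le _ _)
    rw [norm_smul, norm_smul, he, Real.norm_of_nonneg ht, Real.norm_of_nonneg (by linarith)]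
      at this
    rw [max_eq_left ht1]
    linarith

lemma exists_norm_eq_one_forall_le_norm_add
    (hno : ∀ ε : ℝ, ε < 2 → ¬ ∃ F : Finset X, IsInnerNet F ε)
    (s : Finset X) {δ : ℝ} (hδ : 0 < δ) :
    ∃ e : X, ‖e‖ = 1 ∧ ∀ x ∈ s, ‖x‖ + 1 - δ ≤ ‖x + e‖ := by
  classical
  obtain ⟨M, hM⟩ := (s.image norm).exists_le
  set M' := max M 1
  have hM' : 0 < M' := lt_max_of_lt_right one_pos
  set F := (s.filter (· ≠ 0)).image fun x => -(‖x‖⁻¹ • x)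
  have hF : ∀ y ∈ F, ‖y‖ = 1 := by
    simp only [F, Finset.mem_image, Finset.mem_filter]
    rintro _ ⟨x, ⟨-, hx⟩, rfl⟩
    simp [norm_smul, hx]
  obtain ⟨e, he, hfar⟩ := exists_forall_lt_norm_sub_of_not_isInnerNet hF
    fun hF => hno (2 - δ / M') (by linarith [div_pos hδ hM']) ⟨F, hF⟩
  refine ⟨e, he, fun x hxs => ?_⟩
  rcases eq_or_ne x 0 with rfl | hx
  · simp [he, hδ.le]
  set u := ‖x‖⁻¹ • x
  have hu : ‖u‖ = 1 := by simp [u, norm_smul, hx]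
  have hxu : ‖x‖ • u = x := by simp [u, smul_smul, hx]
  have hue : 2 - δ / M' < ‖u + e‖ := by
    simpa [add_comm] using hfar _ (Finset.mem_image_of_mem _ (Finset.mem_filter.2 ⟨hxs, hx⟩))
  have hmax : max ‖x‖ 1 ≤ M' := max_le_max_right 1 (hM _ (Finset.mem_image_of_mem _ hxs))
  have : max ‖x‖ 1 * (2 - ‖u + e‖) ≤ δ :=
    calc max ‖x‖ 1 * (2 - ‖u + e‖) ≤ M' * (δ / M') := by
          gcongr
          · linarith [norm_add_le u e]
          · linarith
      _ = δ := mul_div_cancel₀ δ hM'.ne'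
  have := le_norm_smul_add_of_norm_eq_one hu he (norm_nonneg x)
  rw [hxu] at this
  linarith

end

theorem stmt_17_general {X : Type*} [NormedAddCommGroup X] [NormedSpace ℝ X]
    [TopologicalSpace.SeparableSpace X]
    (hno : ∀ ε : ℝ, ε < 2 → ¬ ∃ F : Finset X, IsInnerNet F ε) :
    ∃ e : ℕ → X, (∀ n, ‖e n‖ ≤ 1) ∧
      ∀ x : X, Filter.Tendsto (fun n => ‖x + e n‖) Filter.atTop (nhds (‖x‖ + 1)) := by
  classical
  obtain ⟨d, hd⟩ := TopologicalSpace.exists_dense_seq X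
  choose e he hlower using fun n : ℕ => exists_norm_eq_one_forall_le_norm_add hno
    ((Finset.range (n + 1)).image d) (Nat.one_div_pos_of_nat (n := n))
  refine ⟨e, fun n => (he n).le, fun x => hd.induction_on x
    (isClosed_setOf_tendsto_norm_add e 1) fun k => ?_⟩
  have hlim : Tendsto (fun n : ℕ => ‖d k‖ + 1 - 1 / ((n : ℝ) + 1)) atTop (𝓝 (‖d k‖ + 1)) := by
    simpa using tendsto_const_nhds.sub (tendsto_one_div_add_atTop_nhds_zero_nat (𝕜 := ℝ))
  refine tendsto_of_tendsto_of_tendsto_of_le_of_le' hlim tendsto_const_nhds ?_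
    (Eventually.of_forall fun n => ?_)
  · filter_upwards [eventually_ge_atTop k] with n hn
    exact hlower n _ (Finset.mem_image_of_mem d (Finset.mem_range.2 (by omega)))
  · exact (norm_add_le _ _).trans_eq (by rw [he n])

theorem stmt_17 {X : Type*} [NormedAddCommGroup X] [NormedSpace ℝ X]
    [CompleteSpace X] [TopologicalSpace.SeparableSpace X]
    (hno : ∀ ε : ℝ, ε < 2 → ¬ ∃ F : Finset X, IsInnerNet F ε) :
    ∃ e : ℕ → X, (∀ n, ‖e n‖ ≤ 1) ∧
      ∀ x : X, Filter.Tendsto (fun n => ‖x + e n‖) Filter.atTop (nhds (‖x‖ + 1)) :=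
  stmt_17_general hno
end

section
/- Let X be a Banach space that has the Daugavet property with respect to a norming subspace Y ⊂ X*, and let J ≠ {0} be an M-ideal in X. Then J has the Daugavet property with respect to the subspace {y*|_J : y* ∈ Y} of J*; in particular J is an almost Daugavet space. -/
open ContinuousLinearMap

section Dual

variable {𝕜 E F : Type*} [RCLike 𝕜] [NormedAddCommGroup E] [NormedSpace 𝕜 E]
  [NormedAddCommGroup F] [NormedSpace 𝕜 F]

theorem ContinuousLinearMap.exists_lt_norm_comp_of_lt_opNorm (T : E →L[𝕜] F) {r : ℝ}
    (hr : r < ‖T‖) : ∃ φ : StrongDual 𝕜 F, ‖φ‖ ≤ 1 ∧ r < ‖φ.comp T‖ := by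
  obtain ⟨z, hz, hrz⟩ := T.exists_lt_apply_of_lt_opNorm hr
  obtain ⟨φ, hφ, hφz⟩ := exists_dual_vector'' 𝕜 (T z)
  refine ⟨φ, hφ, hrz.trans_le ?_⟩
  calc ‖T z‖ = ‖φ.comp T z‖ := by simp [hφz]
    _ ≤ ‖φ.comp T‖ * ‖z‖ := le_opNorm _ _
    _ ≤ ‖φ.comp T‖ := mul_le_of_le_one_right (norm_nonneg _) hz.le

theorem ContinuousLinearMap.comp_id_add_smulRight (φ f : StrongDual 𝕜 E) (x : E) :
    φ.comp (ContinuousLinearMap.id 𝕜 E + smulRight f x) = φ + φ x • f := by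
  ext y
  simp [mul_comm]

theorem ContinuousLinearMap.norm_comp_subtypeL_le (f : E →L[𝕜] F) (J : Submodule 𝕜 E) :
    ‖f.comp J.subtypeL‖ ≤ ‖f‖ :=
  (opNorm_comp_le _ _).trans (mul_le_of_le_one_right (norm_nonneg _) J.norm_subtypeL_le)

end Dual

/-- `X* = V ⊕₁ J^⊥`: `J` is an M-ideal and `V` is the L-complement of its annihilator. -/
structure IsMIdealComplement {X : Type*} [NormedAddCommGroup X] [NormedSpace ℝ X]
    (J : Subspace ℝ X) (V : Subspace ℝ (X →L[ℝ] ℝ)) : Prop where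
  exists_add : ∀ f : X →L[ℝ] ℝ, ∃ v ∈ V, ∃ w : X →L[ℝ] ℝ, (∀ x ∈ J, w x = 0) ∧ f = v + w
  eq_zero_of_mem : ∀ v ∈ V, (∀ x ∈ J, v x = 0) → v = 0
  norm_add : ∀ v ∈ V, ∀ w : X →L[ℝ] ℝ, (∀ x ∈ J, w x = 0) → ‖v + w‖ = ‖v‖ + ‖w‖

namespace IsMIdealComplement

variable {X : Type*} [NormedAddCommGroup X] [NormedSpace ℝ X] {J : Subspace ℝ X}
  {V : Subspace ℝ (X →L[ℝ] ℝ)}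

theorem norm_le_norm_comp_subtypeL (hM : IsMIdealComplement J V)
    {v : X →L[ℝ] ℝ} (hv : v ∈ V) : ‖v‖ ≤ ‖v.comp J.subtypeL‖ := by
  obtain ⟨e, he, hen⟩ := exists_extension_norm_eq J (v.comp J.subtypeL)
  obtain ⟨v', hv', w', hw', rfl⟩ := hM.exists_add e
  have hvv' : v = v' := sub_eq_zero.mp <| hM.eq_zero_of_mem _ (V.sub_mem hv hv') fun x hx => by
    simpa [hw' x hx, sub_eq_zero] using (he ⟨x, hx⟩).symm
  subst hvv'
  rw [← hen, hM.norm_add v hv w' hw']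
  exact le_add_of_nonneg_right (norm_nonneg _)

theorem norm_add_apply_smul_le_mul_norm_id_add_smulRight (hM : IsMIdealComplement J V)
    {ψ v : X →L[ℝ] ℝ} (hψ : ψ ∈ V) (hv : v ∈ V) (x : J) :
    ‖ψ + ψ x • v‖ ≤ ‖ψ‖ * ‖ContinuousLinearMap.id ℝ J + smulRight (v.comp J.subtypeL) x‖ := by
  have hcomp : (ψ + ψ x • v).comp J.subtypeL =
      (ψ.comp J.subtypeL).comp (ContinuousLinearMap.id ℝ J + smulRight (v.comp J.subtypeL) x) := by
    rw [comp_id_add_smulRight]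
    rfl
  calc ‖ψ + ψ x • v‖ ≤ ‖(ψ + ψ x • v).comp J.subtypeL‖ :=
        hM.norm_le_norm_comp_subtypeL (V.add_mem hψ (V.smul_mem _ hv))
    _ ≤ ‖ψ.comp J.subtypeL‖ * ‖ContinuousLinearMap.id ℝ J + smulRight (v.comp J.subtypeL) x‖ :=
        hcomp ▸ opNorm_comp_le _ _
    _ ≤ ‖ψ‖ * ‖ContinuousLinearMap.id ℝ J + smulRight (v.comp J.subtypeL) x‖ :=
        by gcongr; exact ψ.norm_comp_subtypeL_le J

theorem norm_add_apply_smul_add_le (hM : IsMIdealComplement J V) {φ v : X →L[ℝ] ℝ}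
    (hφ : ‖φ‖ ≤ 1) (hv : v ∈ V) (w : X →L[ℝ] ℝ) (x : J) :
    ‖φ + φ x • (v + w)‖ ≤
      max ‖ContinuousLinearMap.id ℝ J + smulRight (v.comp J.subtypeL) x‖ 1 + ‖x‖ * ‖w‖ := by
  set N := ‖ContinuousLinearMap.id ℝ J + smulRight (v.comp J.subtypeL) x‖
  obtain ⟨ψ, hψ, w₀, hw₀, rfl⟩ := hM.exists_add φ
  have hsplit : (ψ + w₀) + (ψ + w₀) x • (v + w) = (ψ + ψ x • v) + (w₀ + ψ x • w) := by
    rw [add_apply, hw₀ x x.2, add_zero]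
    module
  have hψw₀ : ‖ψ‖ + ‖w₀‖ ≤ 1 := hM.norm_add ψ hψ w₀ hw₀ ▸ hφ
  have hψx : ‖ψ x‖ ≤ ‖x‖ := by
    calc ‖ψ x‖ ≤ ‖ψ‖ * ‖x‖ := le_opNorm _ _
      _ ≤ ‖x‖ := mul_le_of_le_one_left (norm_nonneg _) (by linarith [norm_nonneg w₀])
  have hV : ‖ψ + ψ x • v‖ ≤ ‖ψ‖ * N := hM.norm_add_apply_smul_le_mul_norm_id_add_smulRight hψ hv x
  have hperp : ‖w₀ + ψ x • w‖ ≤ ‖w₀‖ + ‖x‖ * ‖w‖ := by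
    calc ‖w₀ + ψ x • w‖ ≤ ‖w₀‖ + ‖ψ x‖ * ‖w‖ := (norm_add_le _ _).trans_eq (by rw [norm_smul])
      _ ≤ ‖w₀‖ + ‖x‖ * ‖w‖ := by gcongr
  have hmax : ‖ψ‖ * N + ‖w₀‖ ≤ max N 1 := by
    calc ‖ψ‖ * N + ‖w₀‖ ≤ (‖ψ‖ + ‖w₀‖) * max N 1 := by
          rw [add_mul]
          gcongr
          · exact le_max_left _ _
          · exact le_mul_of_one_le_right (norm_nonneg _) (le_max_right _ _)
      _ ≤ max N 1 := mul_le_of_le_one_left (by positivity) hψw₀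
  rw [hsplit]
  linarith [norm_add_le (ψ + ψ x • v) (w₀ + ψ x • w)]

theorem one_add_norm_smulRight_comp_subtypeL_le_max (hM : IsMIdealComplement J V)
    (x : J) {f : X →L[ℝ] ℝ}
    (hf : ‖ContinuousLinearMap.id ℝ X + smulRight f (x : X)‖ = 1 + ‖smulRight f (x : X)‖) :
    1 + ‖smulRight (f.comp J.subtypeL) x‖ ≤
      max ‖ContinuousLinearMap.id ℝ J + smulRight (f.comp J.subtypeL) x‖ 1 := by
  obtain ⟨v, hv, w, hw, rfl⟩ := hM.exists_add f
  have hres : (v + w).comp J.subtypeL = v.comp J.subtypeL := by ext y; simp [hw y y.2]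
  rw [hres, norm_smulRight_apply]
  suffices 1 + ‖v‖ * ‖x‖ ≤ max ‖ContinuousLinearMap.id ℝ J + smulRight (v.comp J.subtypeL) x‖ 1 by
    have := v.norm_comp_subtypeL_le J
    nlinarith [norm_nonneg x]
  refine le_of_forall_pos_lt_add fun ε hε => ?_
  have hr : 1 + ‖v + w‖ * ‖x‖ - ε <
      ‖ContinuousLinearMap.id ℝ X + smulRight (v + w) (x : X)‖ := by
    rw [hf, norm_smulRight_apply]
    exact sub_lt_self _ hε
  obtain ⟨φ, hφ, hlt⟩ := exists_lt_norm_comp_of_lt_opNorm _ hr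
  rw [comp_id_add_smulRight] at hlt
  have := hM.norm_add_apply_smul_add_le hφ hv w x
  rw [hM.norm_add v hv w hw] at hlt
  linarith

theorem norm_id_add_smulRight_comp_subtypeL (hM : IsMIdealComplement J V) (hJ : J ≠ ⊥)
    (x : J) {f : X →L[ℝ] ℝ}
    (hf : ‖ContinuousLinearMap.id ℝ X + smulRight f (x : X)‖ = 1 + ‖smulRight f (x : X)‖) :
    ‖ContinuousLinearMap.id ℝ J + smulRight (f.comp J.subtypeL) x‖ =
      1 + ‖smulRight (f.comp J.subtypeL) x‖ := by
  have : Nontrivial J := Submodule.nontrivial_iff_ne_bot.mpr hJ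
  refine le_antisymm ?_ ?_
  · simpa only [norm_id] using
      norm_add_le (ContinuousLinearMap.id ℝ J) (smulRight (f.comp J.subtypeL) x)
  -- A priori `‖Id_J + g ⊗ x‖ < 1` is possible; the `max` bound excludes it unless `g ⊗ x = 0`.
  have hmax := hM.one_add_norm_smulRight_comp_subtypeL_le_max x hf
  rcases (norm_nonneg (smulRight (f.comp J.subtypeL) x)).eq_or_lt with h0 | hpos
  · rw [← h0, (opNorm_zero_iff _).mp h0.symm, add_zero, add_zero, norm_id]
  · exact (le_max_iff.mp hmax).resolve_right (by linarith)

end IsMIdealComplement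

theorem IsNormingSubspace.map_precomp_subtypeL {X : Type*} [NormedAddCommGroup X]
    [NormedSpace ℝ X] {Y : Subspace ℝ (X →L[ℝ] ℝ)} (hY : IsNormingSubspace Y)
    (J : Subspace ℝ X) : IsNormingSubspace (Y.map (precomp ℝ J.subtypeL).toLinearMap) := by
  intro x
  have hbound : ∀ r ∈ {r : ℝ | ∃ g ∈ Y.map (precomp ℝ J.subtypeL).toLinearMap,
      ‖g‖ ≤ 1 ∧ r = |g x|}, r ≤ ‖x‖ := by
    rintro r ⟨g, -, hg, rfl⟩
    simpa using (g.le_opNorm x).trans (mul_le_of_le_one_left (norm_nonneg _) hg)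
  refine le_antisymm ?_ (Real.sSup_le hbound (norm_nonneg x))
  refine (hY x).trans_le (csSup_le_csSup ⟨‖x‖, hbound⟩ ⟨0, 0, Y.zero_mem, by simp⟩ ?_)
  rintro r ⟨f, hf, hf1, rfl⟩
  exact ⟨f.comp J.subtypeL, Submodule.mem_map_of_mem hf,
    (f.norm_comp_subtypeL_le J).trans hf1, rfl⟩

theorem stmt_18_general {X : Type*} [NormedAddCommGroup X] [NormedSpace ℝ X]
    (Y : Subspace ℝ (X →L[ℝ] ℝ)) (hnorming : IsNormingSubspace Y)
    (hdaug : HasDaugavetWrt Y)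
    (J : Subspace ℝ X) (hJ : J ≠ ⊥)
    -- `J` is an M-ideal: `X* = V ⊕₁ J^⊥`
    (V : Subspace ℝ (X →L[ℝ] ℝ))
    (hsum : ∀ f : X →L[ℝ] ℝ, ∃ v ∈ V, ∃ w : X →L[ℝ] ℝ, (∀ x ∈ J, w x = 0) ∧ f = v + w)
    (hdisj : ∀ v ∈ V, (∀ x ∈ J, v x = 0) → v = 0)
    (hL : ∀ v ∈ V, ∀ w : X →L[ℝ] ℝ, (∀ x ∈ J, w x = 0) → ‖v + w‖ = ‖v‖ + ‖w‖) :
    (∀ (x : J), ∀ f ∈ Y,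
      ‖ContinuousLinearMap.id ℝ J +
          ContinuousLinearMap.smulRight (f.comp J.subtypeL) x‖ =
        1 + ‖ContinuousLinearMap.smulRight (f.comp J.subtypeL) x‖) ∧
      AlmostDaugavet J := by
  have hM : IsMIdealComplement J V := ⟨hsum, hdisj, hL⟩
  have hJdaug : ∀ (x : J), ∀ f ∈ Y,
      ‖ContinuousLinearMap.id ℝ J + smulRight (f.comp J.subtypeL) x‖ =
        1 + ‖smulRight (f.comp J.subtypeL) x‖ := fun x f hf =>
    hM.norm_id_add_smulRight_comp_subtypeL hJ x (hdaug x f hf)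
  refine ⟨hJdaug, _, IsNormingSubspace.map_precomp_subtypeL hnorming J, ?_⟩
  rintro x _ ⟨f, hf, rfl⟩
  exact hJdaug x f hf

theorem stmt_18 {X : Type*} [NormedAddCommGroup X] [NormedSpace ℝ X] [CompleteSpace X]
    (Y : Subspace ℝ (X →L[ℝ] ℝ)) (hnorming : IsNormingSubspace Y)
    (hdaug : HasDaugavetWrt Y)
    (J : Subspace ℝ X) (hJc : IsClosed (J : Set X)) (hJ : J ≠ ⊥)
    -- `J` is an M-ideal: `X* = V ⊕₁ J^⊥`
    (V : Subspace ℝ (X →L[ℝ] ℝ)) (hVc : IsClosed (V : Set (X →L[ℝ] ℝ)))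
    (hsum : ∀ f : X →L[ℝ] ℝ, ∃ v ∈ V, ∃ w : X →L[ℝ] ℝ, (∀ x ∈ J, w x = 0) ∧ f = v + w)
    (hdisj : ∀ v ∈ V, (∀ x ∈ J, v x = 0) → v = 0)
    (hL : ∀ v ∈ V, ∀ w : X →L[ℝ] ℝ, (∀ x ∈ J, w x = 0) → ‖v + w‖ = ‖v‖ + ‖w‖) :
    (∀ (x : J), ∀ f ∈ Y,
      ‖ContinuousLinearMap.id ℝ J +
          ContinuousLinearMap.smulRight (f.comp J.subtypeL) x‖ =
        1 + ‖ContinuousLinearMap.smulRight (f.comp J.subtypeL) x‖) ∧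
      AlmostDaugavet J :=
  stmt_18_general Y hnorming hdaug J hJ V hsum hdisj hL
end

section
/- Let X be a Banach space and (e_n) a sequence in the closed unit ball of X such that lim_{n→∞} ‖x + e_n‖ = ‖x‖ + 1 for every x ∈ X. Then for every x ∈ X and every y* ∈ X* with ‖y*‖ = 1, the rank-one operator T = y* ⊗ x (T(z) = y*(z)x) satisfies ‖Id + T‖ = 1 + ‖T‖ provided lim sup_{n→∞} y*(e_n) = 1. -/
/-!
The bound `‖Id + T‖ ≤ 1 + ‖T‖ = 1 + ‖x‖` is the triangle inequality. For the reverse bound, pass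
to a subsequence along which `y* (e n) → 1`. Then `(Id + T) (e n) = e n + y* (e n) • x` differs
from `x + e n` by `(1 - y* (e n)) • x`, which tends to `0`, while `‖x + e n‖ → ‖x‖ + 1`; since
`‖e n‖ ≤ 1`, these vectors witness `‖Id + T‖ ≥ ‖x‖ + 1`.
-/

open Filter Topology

theorem norm_add_le_norm_add_smul {𝕜 X : Type*} [NormedField 𝕜] [SeminormedAddCommGroup X]
    [NormedSpace 𝕜 X] (x z : X) (t : 𝕜) : ‖x + z‖ ≤ ‖z + t • x‖ + ‖1 - t‖ * ‖x‖ :=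
  calc ‖x + z‖ = ‖(z + t • x) + (1 - t) • x‖ := by rw [sub_smul, one_smul]; abel_nf
    _ ≤ ‖z + t • x‖ + ‖1 - t‖ * ‖x‖ := by grw [norm_add_le, norm_smul]

namespace ContinuousLinearMap

theorem add_one_le_norm_id_add_smulRight {𝕜 X ι : Type*} [NontriviallyNormedField 𝕜]
    [NormedAddCommGroup X] [NormedSpace 𝕜 X] {l : Filter ι} [l.NeBot] {e : ι → X}
    (he : ∀ i, ‖e i‖ ≤ 1) {x : X} (hlim : Tendsto (fun i => ‖x + e i‖) l (𝓝 (‖x‖ + 1)))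
    {y : StrongDual 𝕜 X} (hy : Tendsto (fun i => y (e i)) l (𝓝 1)) :
    ‖x‖ + 1 ≤ ‖ContinuousLinearMap.id 𝕜 X + smulRight y x‖ := by
  have hlower : Tendsto (fun i => ‖x + e i‖ - ‖1 - y (e i)‖ * ‖x‖) l (𝓝 (‖x‖ + 1)) := by
    simpa using hlim.sub (((tendsto_const_nhds (x := (1 : 𝕜))).sub hy).norm.mul_const ‖x‖)
  refine le_of_tendsto hlower (Eventually.of_forall fun i => ?_)
  calc ‖x + e i‖ - ‖1 - y (e i)‖ * ‖x‖ ≤ ‖e i + y (e i) • x‖ := by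
        linarith [norm_add_le_norm_add_smul x (e i) (y (e i))]
    _ = ‖(ContinuousLinearMap.id 𝕜 X + smulRight y x) (e i)‖ := rfl
    _ ≤ ‖ContinuousLinearMap.id 𝕜 X + smulRight y x‖ :=
        (le_opNorm_of_le _ (he i)).trans_eq (mul_one _)

end ContinuousLinearMap

theorem stmt_19_general {X : Type*} [NormedAddCommGroup X] [NormedSpace ℝ X]
    (e : ℕ → X) (he : ∀ n, ‖e n‖ ≤ 1)
    (hlim : ∀ x : X, Filter.Tendsto (fun n => ‖x + e n‖) Filter.atTop (nhds (‖x‖ + 1)))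
    (x : X) (y : X →L[ℝ] ℝ) (hy : ‖y‖ = 1)
    (hsup : Filter.limsup (fun n => y (e n)) Filter.atTop = 1) :
    ‖ContinuousLinearMap.id ℝ X + ContinuousLinearMap.smulRight y x‖ =
      1 + ‖ContinuousLinearMap.smulRight y x‖ := by
  have hye : ∀ n, |y (e n)| ≤ 1 := fun n => by
    simpa [hy] using y.le_opNorm_of_le (he n)
  have hbdd : IsBoundedUnder (· ≤ ·) atTop fun n => y (e n) :=
    isBoundedUnder_of ⟨1, fun n => (abs_le.1 (hye n)).2⟩
  have hcobdd : IsCoboundedUnder (· ≤ ·) atTop fun n => y (e n) :=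
    isCoboundedUnder_le_of_le atTop fun n => (abs_le.1 (hye n)).1
  obtain ⟨φ, hyφ, hφ⟩ := exists_seq_tendsto_limsup hcobdd hbdd
  rw [hsup] at hyφ
  refine le_antisymm (by grw [norm_add_le, ContinuousLinearMap.norm_id_le]) ?_
  rw [ContinuousLinearMap.norm_smulRight_apply, hy, one_mul, add_comm]
  exact ContinuousLinearMap.add_one_le_norm_id_add_smulRight (fun k => he (φ k))
    ((hlim x).comp hφ) hyφ

theorem stmt_19 {X : Type*} [NormedAddCommGroup X] [NormedSpace ℝ X] [CompleteSpace X]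
    (e : ℕ → X) (he : ∀ n, ‖e n‖ ≤ 1)
    (hlim : ∀ x : X, Filter.Tendsto (fun n => ‖x + e n‖) Filter.atTop (nhds (‖x‖ + 1)))
    (x : X) (y : X →L[ℝ] ℝ) (hy : ‖y‖ = 1)
    (hsup : Filter.limsup (fun n => y (e n)) Filter.atTop = 1) :
    ‖ContinuousLinearMap.id ℝ X + ContinuousLinearMap.smulRight y x‖ =
      1 + ‖ContinuousLinearMap.smulRight y x‖ :=
  stmt_19_general e he hlim x y hy hsup
end
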